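/- arXiv:1706.06616 — 9 statements merged into one kernel-verified Lean document; each statement's English description precedes it below -/
import Mathlib

section
/- An L-structure is a model of T∅_L if and only if it is existentially closed. Consequently, T∅_L axiomatizes the class of existentially closed L-structures, i.e., T∅_L is the model companion of the empty L-theory. -/
open FirstOrder FirstOrder.Language

universe u v w

/-- A flat formula in the variables `V`: either `R(z̄)` (`pos = true`), `¬ R(z̄)`
(`pos = false`), or `f(z̄) = z'`.  Constant symbols are `0`-ary function symbols. -/
inductive FlatFormula (L : FirstOrder.Language.{v, w}) (V : Type u) where
  | rel {n : ℕ} (R : L.Relations n) (z : Fin n → V) (pos : Bool) : FlatFormula L V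
  | func {n : ℕ} (f : L.Functions n) (z : Fin n → V) (z' : V) : FlatFormula L V

/-- Realization of a flat formula in an `L`-structure `M` under an assignment `v : V → M`. -/
def FlatFormula.Realize {L : FirstOrder.Language.{v, w}} {V : Type u} {M : Type*}
    [L.Structure M] (v : V → M) : FlatFormula L V → Prop
  | .rel R z pos => (Structure.RelMap R (fun i => v (z i)) ↔ pos = true)
  | .func f z z' => Structure.funMap f (fun i => v (z i)) = v z'

/-- A flat diagram (a set of flat formulas) is consistent if no relation instance occurs both
positively and negatively, and each function symbol is assigned at most one value on each
tuple of variables. -/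
def FlatConsistent {L : FirstOrder.Language.{v, w}} {V : Type u}
    (Δ : Set (FlatFormula L V)) : Prop :=
  (∀ {n : ℕ} (R : L.Relations n) (z : Fin n → V),
      ¬ (FlatFormula.rel R z true ∈ Δ ∧ FlatFormula.rel R z false ∈ Δ)) ∧
  (∀ {n : ℕ} (f : L.Functions n) (z : Fin n → V) (z₁ z₂ : V),
      FlatFormula.func f z z₁ ∈ Δ → FlatFormula.func f z z₂ ∈ Δ → z₁ = z₂)

/-- A flat formula mentions a variable on the right of `α ⊕ β` (i.e. among the `ȳ`)
in its argument tuple. -/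
def FlatFormula.MentionsRight {L : FirstOrder.Language.{v, w}} {α β : Type u} :
    FlatFormula L (α ⊕ β) → Prop
  | .rel _ z _ => ∃ i, (z i).isRight
  | .func _ z _ => ∃ i, (z i).isRight

/-- An extension diagram in `(x̄, ȳ)` (with `x̄` indexed by `Fin m` and `ȳ` by `Fin n`):
a finite consistent flat diagram each of whose formulas mentions a variable among the `ȳ`. -/
def IsExtensionDiagram {L : FirstOrder.Language.{v, w}} {m n : ℕ}
    (Δ : Set (FlatFormula L (Fin m ⊕ Fin n))) : Prop :=
  Δ.Finite ∧ FlatConsistent Δ ∧ ∀ φ ∈ Δ, φ.MentionsRight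

/-- `M ⊨ φ_Δ(ā, b̄)`: all formulas of `Δ` hold under the assignment `Sum.elim a b`, and the
combined tuple `ā b̄` is non-redundant (its entries are pairwise distinct). -/
def RealizesExtDiagram {L : FirstOrder.Language.{v, w}} {m n : ℕ} {M : Type*} [L.Structure M]
    (Δ : Set (FlatFormula L (Fin m ⊕ Fin n))) (a : Fin m → M) (b : Fin n → M) : Prop :=
  (∀ φ ∈ Δ, FlatFormula.Realize (Sum.elim a b) φ) ∧ Function.Injective (Sum.elim a b)

/-- `M` is a model of `T^∅_L`: `M` satisfies the sentence
`ψ_Δ = ∀ x̄ (δ(x̄) → ∃ ȳ φ_Δ(x̄, ȳ))` for every extension diagram `Δ`. -/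
def ModelsTEmpty (L : FirstOrder.Language.{v, w}) (M : Type*) [L.Structure M] : Prop :=
  ∀ (m n : ℕ) (Δ : Set (FlatFormula L (Fin m ⊕ Fin n))), IsExtensionDiagram Δ →
    ∀ a : Fin m → M, Function.Injective a → ∃ b : Fin n → M, RealizesExtDiagram Δ a b

/-- An `L`-structure `A` is existentially closed if every existential quantifier-free
statement with parameters in `A` which holds in some extension of `A` already holds in `A`. -/
def IsExistentiallyClosed (L : FirstOrder.Language.{v, w}) (A : Type u) [L.Structure A] :
    Prop :=
  ∀ (B : Type (max u v w)) [L.Structure B] (g : A ↪[L] B)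
    (m n : ℕ) (φ : L.Formula (Fin m ⊕ Fin n)), φ.IsQF →
      ∀ a : Fin m → A,
        (∃ b : Fin n → B, φ.Realize (Sum.elim (fun i => g (a i)) b)) →
        ∃ b : Fin n → A, φ.Realize (Sum.elim a b)

/-- A bundled `L`-structure (used to quantify existentially over `L`-structures). -/
structure BStructure (L : FirstOrder.Language.{v, w}) : Type (max (u + 1) v w) where
  carrier : Type u
  [struc : L.Structure carrier]

attribute [instance] BStructure.struc

instance {L : FirstOrder.Language.{v, w}} : CoeSort (BStructure.{u} L) (Type u) :=
  ⟨BStructure.carrier⟩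

/-- All variables occurring in a flat formula lie in the set `S`. -/
def FlatFormula.VarsIn {L : FirstOrder.Language.{v, w}} {V : Type u} (S : Set V) :
    FlatFormula L V → Prop
  | .rel _ z _ => ∀ i, z i ∈ S
  | .func _ z z' => (∀ i, z i ∈ S) ∧ z' ∈ S

/-- `Δ` is a complete consistent flat diagram in the variables `S`. -/
def FlatCompleteOn {L : FirstOrder.Language.{v, w}} {V : Type u} (S : Set V)
    (Δ : Set (FlatFormula L V)) : Prop :=
  FlatConsistent Δ ∧ (∀ φ ∈ Δ, FlatFormula.VarsIn S φ) ∧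
  (∀ {n : ℕ} (R : L.Relations n) (z : Fin n → V), (∀ i, z i ∈ S) →
      (FlatFormula.rel R z true ∈ Δ ∨ FlatFormula.rel R z false ∈ Δ)) ∧
  (∀ {n : ℕ} (f : L.Functions n) (z : Fin n → V), (∀ i, z i ∈ S) →
      ∃ z' ∈ S, FlatFormula.func f z z' ∈ Δ)

/-!
If `M` is existentially closed, it realizes `φ_Δ` over any parameters, since `φ_Δ` is realized in
the extension of `M` generated freely by `Δ`: new elements for `ȳ`, function values and relations
as `Δ` prescribes them, those of `M` on tuples from `M`, and a sink for all remaining values.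

Conversely, a quantifier-free formula true in an extension `B` of `M` only involves finitely many
elements of `B` and finitely many symbols. The part of their flat diagram that `M` does not decide
already is an extension diagram, so a model of `T∅_L` realizes it. Sending each element to its
realization is injective and commutes with those symbols, so it carries the formula back to `M`.
-/

universe u'

variable {L : FirstOrder.Language.{v, w}}

namespace FlatFormula

variable {V : Type*}

def toFormula : FlatFormula L V → L.Formula V
  | .rel r z true => r.formula fun i => Term.var (z i)
  | .rel r z false => (r.formula fun i => Term.var (z i)).not
  | .func f z z' => Term.equal (Term.func f fun i => Term.var (z i)) (Term.var z')

theorem isQF_toFormula (ψ : FlatFormula L V) : ψ.toFormula.IsQF := by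
  rcases ψ with ⟨r, z, _ | _⟩ | ⟨f, z, z'⟩
  · exact (BoundedFormula.IsAtomic.rel _ _).isQF.not
  · exact (BoundedFormula.IsAtomic.rel _ _).isQF
  · exact (BoundedFormula.IsAtomic.equal _ _).isQF

theorem realize_toFormula {N : Type*} [L.Structure N] (v : V → N) (ψ : FlatFormula L V) :
    ψ.toFormula.Realize v ↔ ψ.Realize v := by
  rcases ψ with ⟨r, z, _ | _⟩ | ⟨f, z, z'⟩ <;>
    simp [toFormula, FlatFormula.Realize, Formula.realize_rel, Formula.realize_equal]

def SymbolsIn (F : Set (Σ k, L.Functions k)) (R : Set (Σ k, L.Relations k)) :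
    FlatFormula L V → Prop
  | .rel r _ _ => ⟨_, r⟩ ∈ R
  | .func f _ _ => ⟨_, f⟩ ∈ F

theorem finite_setOf_symbolsIn [Finite V] {F : Set (Σ k, L.Functions k)}
    {R : Set (Σ k, L.Relations k)} (hF : F.Finite) (hR : R.Finite) :
    {ψ : FlatFormula L V | ψ.SymbolsIn F R}.Finite := by
  have := hF.to_subtype
  have := hR.to_subtype
  refine (Set.finite_range fun x : (Σ r : R, (Fin r.1.1 → V) × Bool) ⊕
      (Σ f : F, (Fin f.1.1 → V) × V) =>
    x.elim (fun x => FlatFormula.rel x.1.1.2 x.2.1 x.2.2)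
      (fun x => FlatFormula.func x.1.1.2 x.2.1 x.2.2)).subset ?_
  rintro (⟨r, z, pos⟩ | ⟨f, z, z'⟩) h
  · exact ⟨.inl ⟨⟨⟨_, r⟩, h⟩, z, pos⟩, rfl⟩
  · exact ⟨.inr ⟨⟨⟨_, f⟩, h⟩, z, z'⟩, rfl⟩

end FlatFormula

theorem FlatConsistent.of_realize {V : Type*} {N : Type*} [L.Structure N]
    {Δ : Set (FlatFormula L V)} {v : V → N} (hv : Function.Injective v)
    (h : ∀ ψ ∈ Δ, ψ.Realize v) : FlatConsistent Δ := by
  refine ⟨fun r z ⟨htrue, hfalse⟩ => ?_, fun f z z₁ z₂ h₁ h₂ => hv ?_⟩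
  · exact Bool.false_ne_true ((h _ hfalse).1 ((h _ htrue).2 rfl))
  · exact (h _ h₁).symm.trans (h _ h₂)

theorem FirstOrder.Language.BoundedFormula.IsQF.iInf {α β : Type*} {n : ℕ} [Finite β]
    {f : β → L.BoundedFormula α n} (hf : ∀ b, (f b).IsQF) : (BoundedFormula.iInf f).IsQF := by
  suffices ∀ l : List β, ((l.map f).foldr (· ⊓ ·) ⊤).IsQF from this _
  intro l
  induction l with
  | nil => exact IsQF.top
  | cons b l ih => exact (hf b).inf ih

/-- The formula `φ_Δ`. -/
noncomputable def diagramFormula {V : Type*} [Finite V] (Δ : Set (FlatFormula L V))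
    [Finite Δ] : L.Formula V :=
  (Formula.iInf fun ψ : Δ => ψ.1.toFormula) ⊓
    Formula.iInf fun p : {p : V × V // p.1 ≠ p.2} =>
      (Term.equal (Term.var p.1.1) (Term.var p.1.2)).not

theorem isQF_diagramFormula {V : Type*} [Finite V] (Δ : Set (FlatFormula L V)) [Finite Δ] :
    (diagramFormula Δ).IsQF :=
  (BoundedFormula.IsQF.iInf fun ψ => ψ.1.isQF_toFormula).inf
    (BoundedFormula.IsQF.iInf fun _ => (BoundedFormula.IsAtomic.equal _ _).isQF.not)

theorem realize_diagramFormula {V : Type*} [Finite V] (Δ : Set (FlatFormula L V)) [Finite Δ]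
    {N : Type*} [L.Structure N] (v : V → N) :
    (diagramFormula Δ).Realize v ↔ (∀ ψ ∈ Δ, ψ.Realize v) ∧ Function.Injective v := by
  simp only [diagramFormula, Formula.realize_inf, Formula.realize_iInf,
    FlatFormula.realize_toFormula, Formula.realize_not, Formula.realize_equal, Term.realize_var,
    Subtype.forall, Prod.forall, Function.Injective]
  refine and_congr Iff.rfl ⟨fun h x y hxy => ?_, fun h x y hne hxy => hne (h hxy)⟩
  by_contra hne
  exact h x y hne hxy

section

variable {α β : Type u'} {M : Type*}

/-- `M` with a new element for each variable of `β` and a sink `none` for the function values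
that neither `M` nor `Δ` prescribes; `Δ` and `a` only index the structure instance. -/
def DiagramExtension (_Δ : Set (FlatFormula L (α ⊕ β))) (_a : α → M) : Type _ := M ⊕ Option β

namespace DiagramExtension

variable (Δ : Set (FlatFormula L (α ⊕ β))) (a : α → M)

def val : α ⊕ β → DiagramExtension Δ a := Sum.map a some

variable {Δ a}

theorem val_injective (ha : Function.Injective a) : Function.Injective (val Δ a) :=
  ha.sumMap (Option.some_injective _)

theorem val_comp_ne_inl_comp {k : ℕ} {z : Fin k → α ⊕ β} (hz : ∃ i, (z i).isRight)
    (x : Fin k → M) : val Δ a ∘ z ≠ Sum.inl ∘ x := by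
  obtain ⟨i, hi⟩ := hz
  intro h
  obtain ⟨j, hj⟩ := Sum.isRight_iff.1 hi
  have : val Δ a (z i) = Sum.inl (x i) := congrFun h i
  rw [hj] at this
  cases this

variable (Δ a) [L.Structure M]

open Classical in
noncomputable instance : L.Structure (DiagramExtension Δ a) where
  funMap {k} f w :=
    if h : ∃ p : (Fin k → α ⊕ β) × (α ⊕ β), .func f p.1 p.2 ∈ Δ ∧ val Δ a ∘ p.1 = w then
      val Δ a h.choose.2
    else if h' : ∃ x : Fin k → M, Sum.inl ∘ x = w then Sum.inl (Structure.funMap f h'.choose)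
    else Sum.inr none
  RelMap {k} r w := (∃ z, .rel r z true ∈ Δ ∧ val Δ a ∘ z = w) ∨
    ∃ x : Fin k → M, Sum.inl ∘ x = w ∧ Structure.RelMap r x

noncomputable def embedding (hΔ : ∀ ψ ∈ Δ, ψ.MentionsRight) : M ↪[L] DiagramExtension Δ a where
  toFun := Sum.inl
  inj' := Sum.inl_injective
  map_fun' {k} f x := by
    have hx : ∃ x' : Fin k → M, Sum.inl ∘ x' = (Sum.inl ∘ x : Fin k → DiagramExtension Δ a) :=
      ⟨x, rfl⟩
    symm
    refine (dif_neg ?_).trans ((dif_pos hx).trans ?_)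
    · rintro ⟨p, hp, hpx⟩
      exact val_comp_ne_inl_comp (hΔ _ hp) x hpx
    · rw [Sum.inl_injective.comp_left hx.choose_spec]
  map_rel' {k} r x := by
    refine ⟨?_, fun h => Or.inr ⟨x, rfl, h⟩⟩
    rintro (⟨z, hz, hzx⟩ | ⟨x', hx', h⟩)
    · exact absurd hzx (val_comp_ne_inl_comp (hΔ _ hz) x)
    · rwa [← Sum.inl_injective.comp_left hx']

variable {Δ a} in
theorem realize_val (ha : Function.Injective a) (hcons : FlatConsistent Δ)
    (hΔ : ∀ ψ ∈ Δ, ψ.MentionsRight) {ψ : FlatFormula L (α ⊕ β)} (hψ : ψ ∈ Δ) :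
    ψ.Realize (val Δ a) := by
  rcases ψ with ⟨r, z, _ | _⟩ | ⟨f, z, z'⟩
  · simp only [FlatFormula.Realize, Bool.false_eq_true, iff_false]
    rintro (⟨z₁, hz₁, hz⟩ | ⟨x, hx, -⟩)
    · rw [(val_injective ha).comp_left hz] at hz₁
      exact hcons.1 r z ⟨hz₁, hψ⟩
    · exact val_comp_ne_inl_comp (hΔ _ hψ) x hx.symm
  · simp only [FlatFormula.Realize, iff_true]
    exact Or.inl ⟨z, hψ, rfl⟩
  · have hp : ∃ p : (Fin _ → α ⊕ β) × (α ⊕ β),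
        .func f p.1 p.2 ∈ Δ ∧ val Δ a ∘ p.1 = val Δ a ∘ z := ⟨(z, z'), hψ, rfl⟩
    refine (dif_pos hp).trans (congrArg _ (hcons.2 f z _ _ ?_ hψ))
    obtain ⟨hmem, hz⟩ := hp.choose_spec
    rwa [(val_injective ha).comp_left hz] at hmem

end DiagramExtension

end

theorem IsExistentiallyClosed.exists_realize {M : Type u} [L.Structure M]
    (hM : IsExistentiallyClosed L M) {B : Type u} [L.Structure B] (g : M ↪[L] B) {m n : ℕ}
    {φ : L.Formula (Fin m ⊕ Fin n)} (hφ : φ.IsQF) (a : Fin m → M) {b : Fin n → B}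
    (hb : φ.Realize (Sum.elim (g ∘ a) b)) : ∃ b : Fin n → M, φ.Realize (Sum.elim a b) := by
  let e : B ≃ ULift.{max v w} B := Equiv.ulift.symm
  let _ := e.inducedStructure (L := L)
  let E := e.inducedStructureEquiv (L := L)
  refine hM _ (E.toEmbedding.comp g) m n φ hφ a ⟨E ∘ b, ?_⟩
  rw [← StrongHomClass.realize_formula E] at hb
  convert hb using 2
  ext (i | j) <;> rfl

theorem IsExistentiallyClosed.modelsTEmpty {M : Type u} [L.Structure M]
    (hM : IsExistentiallyClosed L M) : ModelsTEmpty L M := by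
  rintro m n Δ ⟨hfin, hcons, hΔ⟩ a ha
  have := hfin.to_subtype
  have hval : Sum.elim (DiagramExtension.embedding Δ a hΔ ∘ a)
      (fun j => DiagramExtension.val Δ a (.inr j)) = DiagramExtension.val Δ a := by
    ext (i | j) <;> rfl
  obtain ⟨b, hb⟩ := hM.exists_realize (DiagramExtension.embedding Δ a hΔ)
    (isQF_diagramFormula Δ) a (b := fun j => DiagramExtension.val Δ a (.inr j)) <| by
      rw [hval, realize_diagramFormula]
      exact ⟨fun ψ => DiagramExtension.realize_val ha hcons hΔ,
        DiagramExtension.val_injective ha⟩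
  exact ⟨b, (realize_diagramFormula Δ _).1 hb⟩

theorem ModelsTEmpty.nonempty {M : Type*} [L.Structure M] (hT : ModelsTEmpty L M) :
    Nonempty M := by
  obtain ⟨b, -⟩ := hT 0 1 ∅ ⟨Set.finite_empty, ⟨fun _ _ h => h.1, fun _ _ _ _ h => h.elim⟩,
    fun _ h => h.elim⟩ Fin.elim0 (Function.injective_of_subsingleton _)
  exact ⟨b 0⟩

theorem FlatFormula.realize_of_not_mentionsRight {α β : Type u'} {M B : Type*} [L.Structure M]
    [L.Structure B] (g : M ↪[L] B) {a : α → M} {c : β → B} (hc : ∀ j, c j ∉ Set.range g)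
    (d : β → M) {ψ : FlatFormula L (α ⊕ β)} (hψ : ¬ψ.MentionsRight)
    (h : ψ.Realize (Sum.elim (g ∘ a) c)) : ψ.Realize (Sum.elim a d) := by
  have hleft {k : ℕ} {z : Fin k → α ⊕ β} (hz : ¬∃ i, (z i).isRight) : ∃ x, z = Sum.inl ∘ x := by
    simp only [not_exists] at hz
    exact ⟨fun i => (z i).getLeft (by simpa using hz i), funext fun i => by simp⟩
  rcases ψ with ⟨r, z, _⟩ | ⟨f, z, z'⟩
  · obtain ⟨x, rfl⟩ := hleft hψ
    exact (g.map_rel r (a ∘ x)).symm.trans h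
  · obtain ⟨x, rfl⟩ := hleft hψ
    have h' : g (Structure.funMap f (a ∘ x)) = Sum.elim (g ∘ a) c z' :=
      (g.map_fun f (a ∘ x)).trans h
    rcases z' with i | j
    · exact g.injective h'
    · exact absurd ⟨_, h'⟩ (hc j)

theorem ModelsTEmpty.exists_realize_of_embedding {M B : Type*} [L.Structure M] [L.Structure B]
    (hT : ModelsTEmpty L M) (g : M ↪[L] B) {m n : ℕ} {a : Fin m → M} {c : Fin n → B}
    (hinj : Function.Injective (Sum.elim (g ∘ a) c)) (hcg : ∀ j, c j ∉ Set.range g)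
    {Δ : Set (FlatFormula L (Fin m ⊕ Fin n))} (hΔ : Δ.Finite)
    (hrealize : ∀ ψ ∈ Δ, ψ.Realize (Sum.elim (g ∘ a) c)) :
    ∃ d : Fin n → M, Function.Injective (Sum.elim a d) ∧ ∀ ψ ∈ Δ, ψ.Realize (Sum.elim a d) := by
  have ha : Function.Injective a := fun i j h => Sum.inl_injective (hinj (congrArg g h))
  obtain ⟨d, hd, hd_inj⟩ := hT m n {ψ ∈ Δ | ψ.MentionsRight}
    ⟨hΔ.subset (Set.sep_subset _ _), .of_realize hinj fun ψ hψ => hrealize ψ hψ.1,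
      fun _ hψ => hψ.2⟩ a ha
  refine ⟨d, hd_inj, fun ψ hψ => ?_⟩
  by_cases hr : ψ.MentionsRight
  · exact hd ψ ⟨hψ, hr⟩
  · exact ψ.realize_of_not_mentionsRight g hcg d hr (hrealize ψ hψ)

namespace FirstOrder.Language

variable {B M : Type*} [L.Structure B] [L.Structure M]

structure IsPartialIsoOn (σ : B → M) (S : Set B) (F : Set (Σ k, L.Functions k))
    (R : Set (Σ k, L.Relations k)) : Prop where
  injOn : S.InjOn σ
  map_fun {k : ℕ} (f : L.Functions k) : ⟨k, f⟩ ∈ F → ∀ s : Fin k → B, (∀ i, s i ∈ S) →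
    Structure.funMap f s ∈ S → σ (Structure.funMap f s) = Structure.funMap f (σ ∘ s)
  map_rel {k : ℕ} (r : L.Relations k) : ⟨k, r⟩ ∈ R → ∀ s : Fin k → B, (∀ i, s i ∈ S) →
    (Structure.RelMap r (σ ∘ s) ↔ Structure.RelMap r s)

variable {S : Set B} {F : Set (Σ k, L.Functions k)} {R : Set (Σ k, L.Relations k)}

theorem IsPartialIsoOn.of_realize {V : Type*} {enc : V → B} {ev : V → M}
    (hev : Function.Injective ev) {σ : B → M} (hσ : ∀ v, σ (enc v) = ev v)
    (hS : S ⊆ Set.range enc)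
    (h : ∀ ψ : FlatFormula L V, ψ.SymbolsIn F R → ψ.Realize enc → ψ.Realize ev) :
    IsPartialIsoOn σ S F R := by
  have hlift {k : ℕ} {s : Fin k → B} (hs : ∀ i, s i ∈ S) : ∃ z, s = enc ∘ z := by
    choose z hz using fun i => hS (hs i)
    exact ⟨z, funext fun i => (hz i).symm⟩
  have hσ' : σ ∘ enc = ev := funext hσ
  refine ⟨fun x hx y hy hxy => ?_, fun f hf s hs hfs => ?_, fun r hr s hs => ?_⟩
  · obtain ⟨v, rfl⟩ := hS hx
    obtain ⟨v', rfl⟩ := hS hy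
    rw [hσ, hσ] at hxy
    rw [hev hxy]
  · obtain ⟨z, rfl⟩ := hlift hs
    obtain ⟨z', hz'⟩ := hS hfs
    have := h (.func f z z') hf hz'.symm
    rw [← hz', hσ, ← Function.comp_assoc, hσ']
    exact this.symm
  · obtain ⟨z, rfl⟩ := hlift hs
    rw [← Function.comp_assoc, hσ']
    by_cases hrz : Structure.RelMap r (enc ∘ z)
    · exact iff_of_true ((h (.rel r z true) hr (iff_of_true hrz rfl)).2 rfl) hrz
    · exact iff_of_false (fun h' => Bool.false_ne_true
        ((h (.rel r z false) hr (iff_of_false hrz Bool.false_ne_true)).1 h')) hrz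


def Term.SupportedIn {γ : Type*} (S : Set B) (F : Set (Σ k, L.Functions k)) (e : γ → B) :
    L.Term γ → Prop
  | var x => e x ∈ S
  | func f ts => ⟨_, f⟩ ∈ F ∧ (func f ts).realize e ∈ S ∧ ∀ i, (ts i).SupportedIn S F e

def BoundedFormula.SupportedIn {α : Type*} (S : Set B) (F : Set (Σ k, L.Functions k))
    (R : Set (Σ k, L.Relations k)) : {n : ℕ} → (α ⊕ Fin n → B) → L.BoundedFormula α n → Prop
  | _, _, falsum => True
  | _, e, equal t₁ t₂ => t₁.SupportedIn S F e ∧ t₂.SupportedIn S F e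
  | _, e, rel r ts => ⟨_, r⟩ ∈ R ∧ ∀ i, (ts i).SupportedIn S F e
  | _, e, imp φ ψ => φ.SupportedIn S F R e ∧ ψ.SupportedIn S F R e
  | _, _, all _ => True

namespace Term

variable {γ : Type*} {e : γ → B}

theorem SupportedIn.realize_mem {t : L.Term γ} (ht : t.SupportedIn S F e) : t.realize e ∈ S := by
  cases t with
  | var x => exact ht
  | func f ts => exact ht.2.1

theorem SupportedIn.mono {S' : Set B} {F' : Set (Σ k, L.Functions k)} (hS : S ⊆ S')
    (hF : F ⊆ F') {t : L.Term γ} (ht : t.SupportedIn S F e) : t.SupportedIn S' F' e := by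
  induction t with
  | var x => exact hS ht
  | func f ts ih => exact ⟨hF ht.1, hS ht.2.1, fun i => ih i (ht.2.2 i)⟩

theorem exists_supportedIn (e : γ → B) (t : L.Term γ) :
    ∃ S F, S.Finite ∧ F.Finite ∧ t.SupportedIn S F e := by
  induction t with
  | var x => exact ⟨{e x}, ∅, Set.finite_singleton _, Set.finite_empty, rfl⟩
  | func f ts ih =>
    choose S F hS hF hts using ih
    exact ⟨insert ((func f ts).realize e) (⋃ i, S i), insert ⟨_, f⟩ (⋃ i, F i),
      (Set.finite_iUnion hS).insert _, (Set.finite_iUnion hF).insert _, Set.mem_insert _ _,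
      Set.mem_insert _ _, fun i => (hts i).mono
        ((Set.subset_iUnion S i).trans (Set.subset_insert _ _))
        ((Set.subset_iUnion F i).trans (Set.subset_insert _ _))⟩

theorem realize_comp_of_supportedIn {σ : B → M} (hσ : IsPartialIsoOn σ S F R) {t : L.Term γ}
    (ht : t.SupportedIn S F e) : t.realize (σ ∘ e) = σ (t.realize e) := by
  induction t with
  | var x => rfl
  | func f ts ih =>
    simp only [realize_func, fun i => ih i (ht.2.2 i)]
    exact (hσ.map_fun f ht.1 _ (fun i => (ht.2.2 i).realize_mem) ht.2.1).symm

end Term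

namespace BoundedFormula

variable {α : Type*}

theorem SupportedIn.mono {S' : Set B} {F' : Set (Σ k, L.Functions k)}
    {R' : Set (Σ k, L.Relations k)} (hS : S ⊆ S') (hF : F ⊆ F') (hR : R ⊆ R') {n : ℕ}
    {e : α ⊕ Fin n → B} {φ : L.BoundedFormula α n} (hφ : φ.SupportedIn S F R e) :
    φ.SupportedIn S' F' R' e := by
  induction φ with
  | falsum | all => trivial
  | equal t₁ t₂ => exact ⟨hφ.1.mono hS hF, hφ.2.mono hS hF⟩
  | rel r ts => exact ⟨hR hφ.1, fun i => (hφ.2 i).mono hS hF⟩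
  | imp φ ψ ihφ ihψ => exact ⟨ihφ hφ.1, ihψ hφ.2⟩

theorem exists_supportedIn {n : ℕ} (e : α ⊕ Fin n → B) (φ : L.BoundedFormula α n) :
    ∃ (S : Set B) (F : Set (Σ k, L.Functions k)) (R : Set (Σ k, L.Relations k)),
      S.Finite ∧ F.Finite ∧ R.Finite ∧ φ.SupportedIn S F R e := by
  induction φ with
  | falsum | all => exact ⟨∅, ∅, ∅, Set.finite_empty, Set.finite_empty, Set.finite_empty, trivial⟩
  | equal t₁ t₂ =>
    obtain ⟨S₁, F₁, hS₁, hF₁, h₁⟩ := t₁.exists_supportedIn e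
    obtain ⟨S₂, F₂, hS₂, hF₂, h₂⟩ := t₂.exists_supportedIn e
    exact ⟨S₁ ∪ S₂, F₁ ∪ F₂, ∅, hS₁.union hS₂, hF₁.union hF₂, Set.finite_empty,
      h₁.mono Set.subset_union_left Set.subset_union_left,
      h₂.mono Set.subset_union_right Set.subset_union_right⟩
  | rel r ts =>
    choose S F hS hF hts using fun i => (ts i).exists_supportedIn e
    exact ⟨⋃ i, S i, ⋃ i, F i, {⟨_, r⟩}, Set.finite_iUnion hS, Set.finite_iUnion hF,
      Set.finite_singleton _, rfl,
      fun i => (hts i).mono (Set.subset_iUnion S i) (Set.subset_iUnion F i)⟩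
  | imp φ ψ ihφ ihψ =>
    obtain ⟨S₁, F₁, R₁, hS₁, hF₁, hR₁, h₁⟩ := ihφ e
    obtain ⟨S₂, F₂, R₂, hS₂, hF₂, hR₂, h₂⟩ := ihψ e
    exact ⟨S₁ ∪ S₂, F₁ ∪ F₂, R₁ ∪ R₂, hS₁.union hS₂, hF₁.union hF₂, hR₁.union hR₂,
      h₁.mono Set.subset_union_left Set.subset_union_left Set.subset_union_left,
      h₂.mono Set.subset_union_right Set.subset_union_right Set.subset_union_right⟩

theorem realize_comp_iff_of_supportedIn {σ : B → M} (hσ : IsPartialIsoOn σ S F R) {n : ℕ}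
    {φ : L.BoundedFormula α n} (hφ : φ.IsQF) {v : α → B} {xs : Fin n → B}
    (h : φ.SupportedIn S F R (Sum.elim v xs)) :
    φ.Realize (σ ∘ v) (σ ∘ xs) ↔ φ.Realize v xs := by
  induction hφ with
  | falsum => exact Iff.rfl
  | of_isAtomic hφ =>
    cases hφ with
    | equal t₁ t₂ =>
      simp only [realize_bdEqual, ← Sum.comp_elim, Term.realize_comp_of_supportedIn hσ h.1,
        Term.realize_comp_of_supportedIn hσ h.2]
      exact hσ.injOn.eq_iff h.1.realize_mem h.2.realize_mem
    | rel r ts =>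
      simp only [realize_rel, ← Sum.comp_elim, fun i => Term.realize_comp_of_supportedIn hσ (h.2 i)]
      exact hσ.map_rel r h.1 _ fun i => (h.2 i).realize_mem
  | imp _ _ ihφ ihψ => exact imp_congr (ihφ h.1) (ihψ h.2)

end BoundedFormula

end FirstOrder.Language

theorem ModelsTEmpty.exists_isPartialIsoOn {M B : Type*} [L.Structure M] [L.Structure B]
    (hT : ModelsTEmpty L M) (g : M ↪[L] B) {S : Set B} (hS : S.Finite)
    {F : Set (Σ k, L.Functions k)} {R : Set (Σ k, L.Relations k)} (hF : F.Finite)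
    (hR : R.Finite) : ∃ σ : B → M, IsPartialIsoOn σ S F R ∧ ∀ x, g x ∈ S → σ (g x) = x := by
  have := hT.nonempty
  obtain ⟨p, a, ha, ha_range⟩ := (hS.preimage g.injective.injOn).fin_param
  obtain ⟨q, c, hc, hc_range⟩ := (hS.sdiff (t := Set.range g)).fin_param
  set enc : Fin p ⊕ Fin q → B := Sum.elim (g ∘ a) c
  have hcg (j : Fin q) : c j ∉ Set.range g := by
    have : c j ∈ S \ Set.range g := hc_range ▸ Set.mem_range_self j
    exact this.2
  have henc : Function.Injective enc :=
    (g.injective.comp ha).sumElim hc fun i j h => hcg j ⟨a i, h⟩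
  obtain ⟨d, hd_inj, hd⟩ := hT.exists_realize_of_embedding g henc hcg
    ((FlatFormula.finite_setOf_symbolsIn hF hR).inter_of_left {ψ | ψ.Realize enc})
    fun ψ hψ => hψ.2
  set σ := Function.extend enc (Sum.elim a d) fun _ => Classical.arbitrary M
  have hσ : ∀ v, σ (enc v) = Sum.elim a d v := henc.extend_apply _ _
  refine ⟨σ, .of_realize hd_inj hσ ?_ fun ψ hF hψ => hd ψ ⟨hF, hψ⟩, fun x hx => ?_⟩
  · intro s hs
    by_cases hsg : s ∈ Set.range g
    · obtain ⟨x, rfl⟩ := hsg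
      obtain ⟨i, rfl⟩ : x ∈ Set.range a := ha_range ▸ hs
      exact ⟨.inl i, rfl⟩
    · obtain ⟨j, rfl⟩ : s ∈ Set.range c := hc_range ▸ ⟨hs, hsg⟩
      exact ⟨.inr j, rfl⟩
  · obtain ⟨i, rfl⟩ : x ∈ Set.range a := ha_range ▸ hx
    exact hσ (.inl i)

theorem ModelsTEmpty.isExistentiallyClosed {M : Type u} [L.Structure M]
    (hT : ModelsTEmpty L M) : IsExistentiallyClosed L M := by
  intro B _ g m n φ hφ a ⟨b, hb⟩
  obtain ⟨S, F, R, hS, hF, hR, hsupp⟩ :=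
    φ.exists_supportedIn (Sum.elim (Sum.elim (g ∘ a) b) default)
  obtain ⟨σ, hσ, hσg⟩ := hT.exists_isPartialIsoOn g (hS.union (Set.finite_range (g ∘ a))) hF hR
  refine ⟨σ ∘ b, ?_⟩
  have hσa : σ ∘ g ∘ a = a := funext fun i => hσg _ (Or.inr ⟨i, rfl⟩)
  have := (BoundedFormula.realize_comp_iff_of_supportedIn hσ hφ
    (hsupp.mono Set.subset_union_left subset_rfl subset_rfl)).2 hb
  rwa [Sum.comp_elim, hσa, Unique.eq_default (σ ∘ default)] at this

/-- An `L`-structure is a model of `T^∅_L` if and only if it is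
existentially closed.  Consequently `T^∅_L` axiomatizes the class of existentially
closed `L`-structures, i.e. `T^∅_L` is the model companion of the empty `L`-theory. -/
theorem modelsTEmpty_iff_isExistentiallyClosed (L : FirstOrder.Language.{v, w})
    (M : Type u) [L.Structure M] :
    ModelsTEmpty L M ↔ IsExistentiallyClosed L M :=
  ⟨ModelsTEmpty.isExistentiallyClosed, IsExistentiallyClosed.modelsTEmpty⟩
end

section
/- T∅_L has quantifier elimination: for every L-formula φ(x̄) there is a quantifier-free L-formula ψ(x̄) in the same free variables such that every model M of T∅_L satisfies ∀x̄ (φ(x̄) ↔ ψ(x̄)). -/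
/-!
It suffices to eliminate `∃ y` from a finite conjunction `C` of literals in `x̄, y`. A valuation
induces an equality pattern on the finite set of subterms of `C`; a class of a pattern is
*determined* if it is named by a term in `x̄` alone, built from the variables `x̄` by function
symbols along the pattern. For a pattern consistent with `C`, the following conditions on `x̄`
are quantifier-free: distinct determined classes have distinct values, and the function and
relation facts of `C` among determined classes hold. They hold for the pattern of any solution of
`C`. Conversely, given `x̄` satisfying them, the facts of `C` involving an undetermined class form
an extension diagram over the determined classes, and in a model of `T∅_L` a realization of it
provides `y`. So `∃ y C` is equivalent to the disjunction of these conditions over all consistent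
patterns.
-/

open FirstOrder FirstOrder.Language

universe u v w

namespace FirstOrder.Language

namespace Term

variable {L : Language} {γ : Type*}

def subterms : L.Term γ → Set (L.Term γ)
  | var x => {var x}
  | func f ts => insert (func f ts) (⋃ i, (ts i).subterms)

theorem mem_subterms_self (t : L.Term γ) : t ∈ t.subterms := by
  cases t <;> simp [subterms]

theorem subterms_finite (t : L.Term γ) : t.subterms.Finite := by
  induction t with
  | var x => simp [subterms]
  | func f ts ih => exact (Set.finite_iUnion ih).insert _

theorem arg_mem_subterms {t : L.Term γ} {m : ℕ} {f : L.Functions m} {ts : Fin m → L.Term γ}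
    (h : func f ts ∈ t.subterms) (i : Fin m) : ts i ∈ t.subterms := by
  induction t with
  | var x => simp [subterms] at h
  | func g us ih =>
    simp only [subterms, Set.mem_insert_iff, Set.mem_iUnion] at h ⊢
    rcases h with h | ⟨j, hj⟩
    · cases h
      exact Or.inr ⟨i, (ts i).mem_subterms_self⟩
    · exact Or.inr ⟨j, ih j hj⟩

end Term

namespace BoundedFormula

variable {L : Language} {α ι : Type*} [Finite ι] {n : ℕ}

theorem isQF_iSup {φ : ι → L.BoundedFormula α n} (h : ∀ i, (φ i).IsQF) : (iSup φ).IsQF := by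
  let _ := Fintype.ofFinite ι
  simp only [iSup]
  induction (Finset.univ : Finset ι).toList with
  | nil => exact isQF_bot
  | cons i l ih => exact (h i).sup ih

theorem isQF_iInf {φ : ι → L.BoundedFormula α n} (h : ∀ i, (φ i).IsQF) : (iInf φ).IsQF := by
  let _ := Fintype.ofFinite ι
  simp only [iInf]
  induction (Finset.univ : Finset ι).toList with
  | nil => exact IsQF.top
  | cons i l ih => exact (h i).inf ih

end BoundedFormula

end FirstOrder.Language

namespace TEmpty

open BoundedFormula

variable {L : FirstOrder.Language}

inductive Literal (L : FirstOrder.Language) (γ : Type*) where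
  | equal (t₁ t₂ : L.Term γ) (pos : Bool)
  | rel {m : ℕ} (R : L.Relations m) (ts : Fin m → L.Term γ) (pos : Bool)

def signed {α : Type*} {n : ℕ} (φ : L.BoundedFormula α n) (pos : Bool) : L.BoundedFormula α n :=
  if pos then φ else φ.not

namespace Literal

variable {γ δ α : Type*} {n : ℕ} {M : Type*} [L.Structure M]

def Realize (e : γ → M) : Literal L γ → Prop
  | equal t₁ t₂ pos => (t₁.realize e = t₂.realize e ↔ pos = true)
  | rel R ts pos => (Structure.RelMap R (fun i => (ts i).realize e) ↔ pos = true)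

def terms : Literal L γ → Set (L.Term γ)
  | equal t₁ t₂ _ => {t₁, t₂}
  | rel _ ts _ => Set.range ts

theorem terms_finite (l : Literal L γ) : l.terms.Finite := by
  cases l with
  | equal t₁ t₂ _ => exact (Set.finite_singleton t₂).insert t₁
  | rel R ts _ => exact Set.finite_range ts

def relabel (g : γ → δ) : Literal L γ → Literal L δ
  | equal t₁ t₂ pos => equal (t₁.relabel g) (t₂.relabel g) pos
  | rel R ts pos => rel R (fun i => (ts i).relabel g) pos

theorem realize_relabel (g : γ → δ) (e : δ → M) (l : Literal L γ) :
    (l.relabel g).Realize e ↔ l.Realize (e ∘ g) := by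
  cases l <;> simp [relabel, Realize, Term.realize_relabel]

def toBoundedFormula : Literal L (α ⊕ Fin n) → L.BoundedFormula α n
  | equal t₁ t₂ pos => signed (t₁.bdEqual t₂) pos
  | rel R ts pos => signed (R.boundedFormula ts) pos

theorem isQF_toBoundedFormula (l : Literal L (α ⊕ Fin n)) : l.toBoundedFormula.IsQF := by
  have signed_isQF {φ : L.BoundedFormula α n} (h : φ.IsAtomic) (pos : Bool) :
      (signed φ pos).IsQF := by
    cases pos
    exacts [h.isQF.not, h.isQF]
  cases l with
  | equal t₁ t₂ pos => exact signed_isQF (IsAtomic.equal t₁ t₂) pos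
  | rel R ts pos => exact signed_isQF (IsAtomic.rel R ts) pos

theorem realize_toBoundedFormula (l : Literal L (α ⊕ Fin n)) (v : α → M) (xs : Fin n → M) :
    l.toBoundedFormula.Realize v xs ↔ l.Realize (Sum.elim v xs) := by
  cases l with
  | equal => cases ‹Bool› <;> simp [toBoundedFormula, signed, Realize]
  | rel => cases ‹Bool› <;> simp [toBoundedFormula, signed, Realize]

end Literal

section DNF

variable {α : Type*} {M : Type*} [L.Structure M]

def dnf {n : ℕ} : L.BoundedFormula α n → Bool → List (List (Literal L (α ⊕ Fin n)))
  | .falsum, pos => if pos then [] else [ [] ]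
  | .equal t₁ t₂, pos => [ [.equal t₁ t₂ pos] ]
  | .rel R ts, pos => [ [.rel R ts pos] ]
  | .imp φ ψ, true => dnf φ false ++ dnf ψ true
  | .imp φ ψ, false => (dnf φ true).flatMap fun c => (dnf ψ false).map (c ++ ·)
  | .all _, _ => []

theorem exists_mem_dnf_iff {n : ℕ} {φ : L.BoundedFormula α n} (hφ : φ.IsQF) (pos : Bool)
    (v : α → M) (xs : Fin n → M) :
    (∃ c ∈ dnf φ pos, ∀ l ∈ c, l.Realize (Sum.elim v xs)) ↔ (φ.Realize v xs ↔ pos = true) := by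
  induction hφ generalizing pos with
  | falsum => cases pos <;> simp [dnf, BoundedFormula.Realize]
  | of_isAtomic h =>
    cases h <;> simp [dnf, Literal.Realize, BoundedFormula.Realize, Term.bdEqual,
      Relations.boundedFormula]
  | imp _ _ ih₁ ih₂ =>
    cases pos
    · have h₁ := ih₁ true
      have h₂ := ih₂ false
      simp only [Bool.false_eq_true, iff_false, iff_true] at h₁ h₂ ⊢
      simp only [dnf, List.mem_flatMap, List.mem_map, realize_imp, Classical.not_imp, ← h₁, ← h₂]
      constructor
      · rintro ⟨_, ⟨c₁, hc₁, c₂, hc₂, rfl⟩, h⟩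
        exact ⟨⟨c₁, hc₁, fun l hl => h l (List.mem_append_left _ hl)⟩,
          ⟨c₂, hc₂, fun l hl => h l (List.mem_append_right _ hl)⟩⟩
      · rintro ⟨⟨c₁, hc₁, h₁⟩, ⟨c₂, hc₂, h₂⟩⟩
        exact ⟨c₁ ++ c₂, ⟨c₁, hc₁, c₂, hc₂, rfl⟩, List.forall_mem_append.2 ⟨h₁, h₂⟩⟩
    · simp only [dnf, List.mem_append, or_and_right, exists_or, ih₁, ih₂, realize_imp,
        Bool.false_eq_true, iff_false, iff_true]
      tauto

end DNF

section Nodes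

variable {β : Type*} (C : List (Literal L (Option β)))

/-- `none` is the variable to be eliminated; it is a node even if it does not occur in `C`. -/
def nodes : Set (L.Term (Option β)) :=
  insert (.var none) (⋃ l ∈ C, ⋃ t ∈ l.terms, t.subterms)

theorem nodes_finite : (nodes C).Finite :=
  ((List.finite_toSet C).biUnion fun l _ =>
    l.terms_finite.biUnion fun t _ => t.subterms_finite).insert _

variable {C}

theorem var_none_mem_nodes : .var none ∈ nodes C := Set.mem_insert _ _

theorem mem_nodes_of_mem_terms {l : Literal L (Option β)} (hl : l ∈ C) {t : L.Term (Option β)}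
    (ht : t ∈ l.terms) : t ∈ nodes C :=
  Set.mem_insert_of_mem _ (Set.mem_biUnion hl (Set.mem_biUnion ht t.mem_subterms_self))

theorem arg_mem_nodes {m : ℕ} {f : L.Functions m} {ts : Fin m → L.Term (Option β)}
    (h : .func f ts ∈ nodes C) (i : Fin m) : ts i ∈ nodes C := by
  simp only [nodes, Set.mem_insert_iff, Set.mem_iUnion] at h ⊢
  rcases h with h | ⟨l, hl, t, ht, hsub⟩
  · cases h
  · exact Or.inr ⟨l, hl, t, ht, Term.arg_mem_subterms hsub i⟩

variable (C)

abbrev Node := ↥(nodes C)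

instance : Finite (Node C) := (nodes_finite C).to_subtype

instance : Nonempty (Node C) := ⟨⟨_, var_none_mem_nodes⟩⟩

/-- An equality pattern on the nodes: `p` identifies two nodes when it sends them to the same
node, which serves as the name of their class. -/
abbrev Pattern := Node C → Node C

end Nodes

namespace Pattern

variable {β : Type*} {C : List (Literal L (Option β))} (p : Pattern C)

open Classical in
/-- Terms outside `nodes C` get the junk class of `var none`. -/
noncomputable def cls (t : L.Term (Option β)) : Node C :=
  if h : t ∈ nodes C then p ⟨t, h⟩ else p ⟨_, var_none_mem_nodes⟩

theorem cls_of_mem {t : L.Term (Option β)} (h : t ∈ nodes C) : p.cls t = p ⟨t, h⟩ := dif_pos h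

structure Valid : Prop where
  cls_func_eq {m : ℕ} {f : L.Functions m} {ts ts' : Fin m → L.Term (Option β)} :
    .func f ts ∈ nodes C → .func f ts' ∈ nodes C → (∀ i, p.cls (ts i) = p.cls (ts' i)) →
      p.cls (.func f ts) = p.cls (.func f ts')
  pos_eq_of_rel {m : ℕ} {R : L.Relations m} {ts ts' : Fin m → L.Term (Option β)}
    {pos pos' : Bool} : .rel R ts pos ∈ C → .rel R ts' pos' ∈ C →
      (∀ i, p.cls (ts i) = p.cls (ts' i)) → pos = pos'
  cls_eq_iff_of_equal {t₁ t₂ : L.Term (Option β)} {pos : Bool} :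
    .equal t₁ t₂ pos ∈ C → (p.cls t₁ = p.cls t₂ ↔ pos = true)

/-- `u` is a term in the free variables `β` alone naming the class `c`. -/
inductive Represents : Node C → L.Term β → Prop
  | var {b : β} : Term.var (some b) ∈ nodes C → Represents (p.cls (Term.var (some b))) (.var b)
  | func {m : ℕ} {f : L.Functions m} {ts : Fin m → L.Term (Option β)}
      {us : Fin m → L.Term β} : Term.func f ts ∈ nodes C →
      (∀ i, Represents (p.cls (ts i)) (us i)) → Represents (p.cls (.func f ts)) (.func f us)

def IsDetermined (c : Node C) : Prop := ∃ u, p.Represents c u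

noncomputable def rep {c : Node C} (h : p.IsDetermined c) : L.Term β := h.choose

theorem represents_rep {c : Node C} (h : p.IsDetermined c) : p.Represents c (p.rep h) :=
  h.choose_spec

theorem isDetermined_cls_var {b : β} (h : .var (some b) ∈ nodes C) :
    p.IsDetermined (p.cls (.var (some b))) :=
  ⟨_, .var h⟩

theorem isDetermined_cls_func {m : ℕ} {f : L.Functions m} {ts : Fin m → L.Term (Option β)}
    (h : .func f ts ∈ nodes C) (hts : ∀ i, p.IsDetermined (p.cls (ts i))) :
    p.IsDetermined (p.cls (.func f ts)) :=
  ⟨_, .func h fun i => p.represents_rep (hts i)⟩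

theorem Represents.exists_cls_eq {p : Pattern C} {c : Node C} {u : L.Term β}
    (h : p.Represents c u) : ∃ t ∈ nodes C, p.cls t = c := by
  cases h with
  | var hb => exact ⟨_, hb, rfl⟩
  | func ht _ => exact ⟨_, ht, rfl⟩

theorem Represents.realize_eq {M : Type*} [L.Structure M] {p : Pattern C} {e : Option β → M}
    {val : Node C → M} (hval : ∀ t ∈ nodes C, t.realize e = val (p.cls t)) {c : Node C}
    {u : L.Term β} (h : p.Represents c u) : u.realize (e ∘ some) = val c := by
  induction h with
  | var hb => exact hval _ hb
  | func ht _ ih =>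
    rw [← hval _ ht, Term.realize_func, Term.realize_func]
    congr 1
    funext i
    rw [ih i, hval _ (arg_mem_nodes ht i)]

open Classical in
noncomputable def pairConstraint (c c' : Node C) : Option (Literal L β) :=
  if h : p.IsDetermined c ∧ p.IsDetermined c' ∧ c ≠ c' then
    some (.equal (p.rep h.1) (p.rep h.2.1) false)
  else none

open Classical in
noncomputable def nodeConstraint : L.Term (Option β) → Option (Literal L β)
  | .var none => none
  | .var (some b) =>
    if h : p.IsDetermined (p.cls (.var (some b))) then some (.equal (.var b) (p.rep h) true)
    else none
  | .func f ts =>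
    if h : (∀ i, p.IsDetermined (p.cls (ts i))) ∧ p.IsDetermined (p.cls (.func f ts)) then
      some (.equal (.func f fun i => p.rep (h.1 i)) (p.rep h.2) true)
    else none

open Classical in
noncomputable def literalConstraint : Literal L (Option β) → Option (Literal L β)
  | .equal _ _ _ => none
  | .rel R ts pos =>
    if h : ∀ i, p.IsDetermined (p.cls (ts i)) then some (.rel R (fun i => p.rep (h i)) pos)
    else none

def constraints : Set (Literal L β) :=
  {l | (∃ c c', p.pairConstraint c c' = some l) ∨ (∃ t ∈ nodes C, p.nodeConstraint t = some l) ∨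
    ∃ l' ∈ C, p.literalConstraint l' = some l}

theorem constraints_finite : p.constraints.Finite := by
  refine ((((Set.finite_range fun cc : Node C × Node C => p.pairConstraint cc.1 cc.2).union
    ((nodes_finite C).image p.nodeConstraint)).union
    ((List.finite_toSet C).image p.literalConstraint)).preimage
    (Option.some_injective _).injOn).subset ?_
  rintro l (⟨c, c', h⟩ | ⟨t, ht, h⟩ | ⟨l', hl', h⟩)
  · exact Or.inl (Or.inl ⟨(c, c'), h⟩)
  · exact Or.inl (Or.inr ⟨t, ht, h⟩)
  · exact Or.inr ⟨l', hl', h⟩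

instance : Finite p.constraints := p.constraints_finite.to_subtype

section OfRealize

variable {M : Type*} [L.Structure M] (C) (e : Option β → M)

noncomputable def ofRealize : Pattern C :=
  fun s => Function.invFun (fun t : Node C => t.1.realize e) (s.1.realize e)

variable {C e}

theorem realize_cls_ofRealize {t : L.Term (Option β)} (ht : t ∈ nodes C) :
    ((ofRealize C e).cls t).1.realize e = t.realize e := by
  rw [cls_of_mem _ ht]
  exact Function.invFun_eq (f := fun s : Node C => s.1.realize e) ⟨⟨t, ht⟩, rfl⟩

theorem ofRealize_cls_eq_iff {t s : L.Term (Option β)} (ht : t ∈ nodes C) (hs : s ∈ nodes C) :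
    (ofRealize C e).cls t = (ofRealize C e).cls s ↔ t.realize e = s.realize e := by
  refine ⟨fun h => ?_, fun h => ?_⟩
  · rw [← realize_cls_ofRealize ht, h, realize_cls_ofRealize hs]
  · rw [cls_of_mem _ ht, cls_of_mem _ hs]
    exact congrArg (Function.invFun _) h

theorem ofRealize_valid (hC : ∀ l ∈ C, l.Realize e) : (ofRealize C e).Valid where
  cls_func_eq ht ht' hargs := by
    rw [ofRealize_cls_eq_iff ht ht', Term.realize_func, Term.realize_func]
    congr 1
    funext i
    exact (ofRealize_cls_eq_iff (arg_mem_nodes ht i) (arg_mem_nodes ht' i)).1 (hargs i)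
  pos_eq_of_rel {_ _ ts ts' _ _} hl hl' hargs := by
    have hts : (fun i => (ts i).realize e) = fun i => (ts' i).realize e := funext fun i =>
      (ofRealize_cls_eq_iff (mem_nodes_of_mem_terms hl ⟨i, rfl⟩)
        (mem_nodes_of_mem_terms hl' ⟨i, rfl⟩)).1 (hargs i)
    have h := hC _ hl
    have h' := hC _ hl'
    simp only [Literal.Realize, hts] at h h'
    exact Bool.eq_iff_iff.2 (h.symm.trans h')
  cls_eq_iff_of_equal hl := by
    rw [ofRealize_cls_eq_iff (mem_nodes_of_mem_terms hl (Set.mem_insert _ _))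
      (mem_nodes_of_mem_terms hl (Set.mem_insert_of_mem _ rfl))]
    exact hC _ hl

theorem realize_rep_ofRealize {c : Node C} (h : (ofRealize C e).IsDetermined c) :
    ((ofRealize C e).rep h).realize (e ∘ some) = c.1.realize e :=
  (represents_rep _ h).realize_eq (val := fun c => c.1.realize e) fun _ ht =>
    (realize_cls_ofRealize ht).symm

theorem eq_of_realize_rep_ofRealize_eq {c c' : Node C} (h : (ofRealize C e).IsDetermined c)
    (h' : (ofRealize C e).IsDetermined c')
    (heq : ((ofRealize C e).rep h).realize (e ∘ some) =
      ((ofRealize C e).rep h').realize (e ∘ some)) :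
    c = c' := by
  obtain ⟨t, ht, rfl⟩ := (represents_rep _ h).exists_cls_eq
  obtain ⟨t', ht', rfl⟩ := (represents_rep _ h').exists_cls_eq
  rw [realize_rep_ofRealize, realize_rep_ofRealize, realize_cls_ofRealize ht,
    realize_cls_ofRealize ht'] at heq
  exact (ofRealize_cls_eq_iff ht ht').2 heq

theorem realize_of_mem_constraints_ofRealize (hC : ∀ l ∈ C, l.Realize e) :
    ∀ l ∈ (ofRealize C e).constraints, l.Realize (e ∘ some) := by
  rintro l (⟨c, c', h⟩ | ⟨t, ht, h⟩ | ⟨l', hl', h⟩)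
  · rw [pairConstraint] at h
    split_ifs at h with hc
    cases h
    simp only [Literal.Realize, Bool.false_eq_true, iff_false]
    exact fun heq => hc.2.2 (eq_of_realize_rep_ofRealize_eq hc.1 hc.2.1 heq)
  · match t, ht, h with
    | .var none, _, h => cases h
    | .var (some b), ht, h =>
      rw [nodeConstraint] at h
      split_ifs at h with hd
      cases h
      simp only [Literal.Realize, realize_rep_ofRealize, realize_cls_ofRealize ht, iff_true]
      rfl
    | .func f ts, ht, h =>
      rw [nodeConstraint] at h
      split_ifs at h with hd
      cases h
      simp only [Literal.Realize, Term.realize_func, realize_rep_ofRealize,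
        realize_cls_ofRealize (arg_mem_nodes ht _), realize_cls_ofRealize ht]
  · cases l' with
    | equal => cases h
    | rel R ts pos =>
      rw [literalConstraint] at h
      split_ifs at h with hd
      cases h
      simp only [Literal.Realize, realize_rep_ofRealize,
        realize_cls_ofRealize (mem_nodes_of_mem_terms hl' ⟨_, rfl⟩)]
      exact hC _ hl'

end OfRealize

section Diagram

variable {M : Type*} [L.Structure M]

abbrev DiagramVar : Type :=
  Fin (Nat.card {c // p.IsDetermined c}) ⊕ Fin (Nat.card {c // ¬ p.IsDetermined c})

open Classical in
/-- Determined classes become the parameters `x̄` of the extension diagram, the others the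
new elements `ȳ`. -/
noncomputable def classVar : Node C ≃ p.DiagramVar :=
  (Equiv.sumCompl p.IsDetermined).symm.trans
    (Equiv.sumCongr (Finite.equivFin _) (Finite.equivFin _))

theorem classVar_isRight_iff (c : Node C) : (p.classVar c).isRight ↔ ¬ p.IsDetermined c := by
  classical
  by_cases h : p.IsDetermined c <;>
    simp [classVar, h, Equiv.sumCompl_symm_apply_of_pos, Equiv.sumCompl_symm_apply_of_neg]

noncomputable def flatOfTerm : L.Term (Option β) → Option (FlatFormula L p.DiagramVar)
  | .var _ => none
  | .func f ts =>
    some (.func f (fun i => p.classVar (p.cls (ts i))) (p.classVar (p.cls (.func f ts))))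

noncomputable def flatOfLiteral : Literal L (Option β) → Option (FlatFormula L p.DiagramVar)
  | .equal _ _ _ => none
  | .rel R ts pos => some (.rel R (fun i => p.classVar (p.cls (ts i))) pos)

def diagram : Set (FlatFormula L p.DiagramVar) :=
  {φ | φ.MentionsRight ∧
    ((∃ t ∈ nodes C, p.flatOfTerm t = some φ) ∨ ∃ l ∈ C, p.flatOfLiteral l = some φ)}

theorem mem_diagram_rel {m : ℕ} {R : L.Relations m} {z : Fin m → p.DiagramVar} {pos : Bool}
    (h : .rel R z pos ∈ p.diagram) :
    ∃ ts, Literal.rel R ts pos ∈ C ∧ ∀ i, p.classVar (p.cls (ts i)) = z i := by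
  obtain ⟨-, ⟨t, -, ht⟩ | ⟨l, hl, hl'⟩⟩ := h
  · cases t <;> cases ht
  · cases l with
    | equal => cases hl'
    | rel R' ts pos' =>
      cases hl'
      exact ⟨ts, hl, fun i => rfl⟩

theorem mem_diagram_func {m : ℕ} {f : L.Functions m} {z : Fin m → p.DiagramVar}
    {z' : p.DiagramVar} (h : .func f z z' ∈ p.diagram) :
    ∃ ts, Term.func f ts ∈ nodes C ∧ (∀ i, p.classVar (p.cls (ts i)) = z i) ∧
      p.classVar (p.cls (.func f ts)) = z' := by
  obtain ⟨-, ⟨t, ht, ht'⟩ | ⟨l, -, hl'⟩⟩ := h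
  · cases t with
    | var => cases ht'
    | func f' ts =>
      cases ht'
      exact ⟨ts, ht, fun i => rfl, rfl⟩
  · cases l <;> cases hl'

theorem diagram_isExtensionDiagram (hp : p.Valid) : IsExtensionDiagram p.diagram := by
  refine ⟨?_, ⟨fun R z ⟨h, h'⟩ => ?_, fun f z z₁ z₂ h₁ h₂ => ?_⟩, fun φ hφ => hφ.1⟩
  · refine ((((nodes_finite C).image p.flatOfTerm).union
      ((List.finite_toSet C).image p.flatOfLiteral)).preimage
      (Option.some_injective _).injOn).subset ?_
    rintro φ ⟨-, ⟨t, ht, h⟩ | ⟨l, hl, h⟩⟩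
    exacts [Or.inl ⟨t, ht, h⟩, Or.inr ⟨l, hl, h⟩]
  · obtain ⟨ts, hl, hts⟩ := p.mem_diagram_rel h
    obtain ⟨ts', hl', hts'⟩ := p.mem_diagram_rel h'
    exact Bool.true_eq_false ▸ hp.pos_eq_of_rel hl hl' fun i =>
      p.classVar.injective ((hts i).trans (hts' i).symm)
  · obtain ⟨ts, ht, hts, rfl⟩ := p.mem_diagram_func h₁
    obtain ⟨ts', ht', hts', rfl⟩ := p.mem_diagram_func h₂
    exact congrArg p.classVar (hp.cls_func_eq ht ht' fun i =>
      p.classVar.injective ((hts i).trans (hts' i).symm))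

noncomputable def parameters (u : β → M) (i : Fin (Nat.card {c // p.IsDetermined c})) : M :=
  (p.rep ((Finite.equivFin _).symm i).2).realize u

theorem parameters_injective {u : β → M} (hu : ∀ l ∈ p.constraints, l.Realize u) :
    Function.Injective (p.parameters u) := by
  intro i j hij
  by_contra hne
  set c := (Finite.equivFin {c // p.IsDetermined c}).symm i
  set c' := (Finite.equivFin {c // p.IsDetermined c}).symm j
  have hcc : c.1 ≠ c'.1 := fun h => hne ((Finite.equivFin _).symm.injective (Subtype.ext h))
  have h := hu _ (Or.inl ⟨c.1, c'.1, dif_pos ⟨c.2, c'.2, hcc⟩⟩)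
  exact absurd (h.1 hij) Bool.false_ne_true

noncomputable def classValue (u : β → M) (b : Fin (Nat.card {c // ¬ p.IsDetermined c}) → M)
    (c : Node C) : M :=
  Sum.elim (p.parameters u) b (p.classVar c)

theorem classValue_of_isDet {u : β → M} {b : Fin (Nat.card {c // ¬ p.IsDetermined c}) → M}
    {c : Node C} (h : p.IsDetermined c) : p.classValue u b c = (p.rep h).realize u := by
  classical
  simp [classValue, classVar, Equiv.sumCompl_symm_apply_of_pos h, parameters]

theorem realize_eq_classValue {u : β → M} {b : Fin (Nat.card {c // ¬ p.IsDetermined c}) → M}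
    (hu : ∀ l ∈ p.constraints, l.Realize u)
    (hb : ∀ φ ∈ p.diagram, φ.Realize (Sum.elim (p.parameters u) b)) {t : L.Term (Option β)}
    (ht : t ∈ nodes C) :
    t.realize (Option.elim' (p.classValue u b (p.cls (.var none))) u) =
      p.classValue u b (p.cls t) := by
  induction t with
  | var x =>
    cases x with
    | none => rfl
    | some x =>
      have hd := p.isDetermined_cls_var ht
      have h := hu _ (Or.inr (Or.inl ⟨_, ht, by rw [nodeConstraint, dif_pos hd]⟩))
      simp only [Literal.Realize, iff_true] at h
      rw [p.classValue_of_isDet hd, ← h]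
      rfl
  | func f ts ih =>
    rw [Term.realize_func]
    simp only [fun i => ih i (arg_mem_nodes ht i)]
    by_cases hd : ∀ i, p.IsDetermined (p.cls (ts i))
    · have hd' := p.isDetermined_cls_func ht hd
      have h := hu _ (Or.inr (Or.inl ⟨_, ht, by rw [nodeConstraint, dif_pos ⟨hd, hd'⟩]⟩))
      simp only [Literal.Realize, Term.realize_func, iff_true] at h
      rw [p.classValue_of_isDet hd', ← h]
      simp only [p.classValue_of_isDet (hd _)]
    · obtain ⟨i, hi⟩ := not_forall.1 hd
      refine hb _ ⟨?_, Or.inl ⟨_, ht, rfl⟩⟩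
      exact ⟨i, (p.classVar_isRight_iff _).2 hi⟩

theorem Valid.exists_realize (hM : ModelsTEmpty L M) {p : Pattern C} (hp : p.Valid) {u : β → M}
    (hu : ∀ l ∈ p.constraints, l.Realize u) : ∃ a, ∀ l ∈ C, l.Realize (Option.elim' a u) := by
  obtain ⟨b, hb, hinj⟩ := hM _ _ p.diagram (p.diagram_isExtensionDiagram hp) (p.parameters u)
    (p.parameters_injective hu)
  have hval {t} (ht : t ∈ nodes C) := p.realize_eq_classValue hu hb ht
  have hcinj : Function.Injective (p.classValue u b) := hinj.comp p.classVar.injective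
  refine ⟨p.classValue u b (p.cls (.var none)), fun l hl => ?_⟩
  cases l with
  | equal t₁ t₂ pos =>
    simp only [Literal.Realize]
    rw [hval (mem_nodes_of_mem_terms hl (Set.mem_insert _ _)),
      hval (mem_nodes_of_mem_terms hl (Set.mem_insert_of_mem _ rfl)), hcinj.eq_iff]
    exact hp.cls_eq_iff_of_equal hl
  | rel R ts pos =>
    simp only [Literal.Realize, hval (mem_nodes_of_mem_terms hl ⟨_, rfl⟩)]
    by_cases hd : ∀ i, p.IsDetermined (p.cls (ts i))
    · have h := hu _ (Or.inr (Or.inr ⟨_, hl, by rw [literalConstraint, dif_pos hd]⟩))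
      simpa only [Literal.Realize, p.classValue_of_isDet (hd _)] using h
    · obtain ⟨i, hi⟩ := not_forall.1 hd
      refine hb _ ⟨?_, Or.inr ⟨_, hl, rfl⟩⟩
      exact ⟨i, (p.classVar_isRight_iff _).2 hi⟩

end Diagram

end Pattern

theorem exists_realize_iff_exists_valid {M : Type*} [L.Structure M] (hM : ModelsTEmpty L M)
    {β : Type*} (C : List (Literal L (Option β))) (u : β → M) :
    (∃ a, ∀ l ∈ C, l.Realize (Option.elim' a u)) ↔
      ∃ p : Pattern C, p.Valid ∧ ∀ l ∈ p.constraints, l.Realize u :=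
  ⟨fun ⟨_, h⟩ => ⟨_, Pattern.ofRealize_valid h, Pattern.realize_of_mem_constraints_ofRealize h⟩,
    fun ⟨_, hp, hu⟩ => hp.exists_realize hM hu⟩

section Elimination

variable {α : Type*} {n : ℕ}

def lastToNone : α ⊕ Fin (n + 1) → Option (α ⊕ Fin n) :=
  Sum.elim (some ∘ Sum.inl) (Fin.lastCases none (some ∘ Sum.inr))

theorem elim'_comp_lastToNone {M : Type*} (v : α → M) (xs : Fin n → M) (a : M) :
    Option.elim' a (Sum.elim v xs) ∘ lastToNone = Sum.elim v (Fin.snoc xs a) := by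
  funext z
  rcases z with x | i
  · rfl
  · induction i using Fin.lastCases <;> simp [lastToNone]

open Classical in
theorem exists_isQF_iff_exists (ψ : L.BoundedFormula α (n + 1)) (hψ : ψ.IsQF) :
    ∃ θ : L.BoundedFormula α n, θ.IsQF ∧ ∀ (M : Type*) [L.Structure M], ModelsTEmpty L M →
      ∀ (v : α → M) (xs : Fin n → M), (∃ a, ψ.Realize v (Fin.snoc xs a)) ↔ θ.Realize v xs := by
  refine ⟨iSup fun c : {c // c ∈ dnf ψ true} =>
    iSup fun p : {p : Pattern (c.1.map (Literal.relabel lastToNone)) // p.Valid} =>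
      iInf fun l : p.1.constraints => l.1.toBoundedFormula,
    isQF_iSup fun _ => isQF_iSup fun _ => isQF_iInf fun l => l.1.isQF_toBoundedFormula, ?_⟩
  intro M _ hM v xs
  simp only [realize_iSup, realize_iInf, Literal.realize_toBoundedFormula, Subtype.exists,
    Subtype.forall, exists_prop]
  calc (∃ a, ψ.Realize v (Fin.snoc xs a))
      ↔ ∃ a, ∃ c ∈ dnf ψ true, ∀ l ∈ c, l.Realize (Sum.elim v (Fin.snoc xs a)) := by
        simp only [exists_mem_dnf_iff hψ, iff_true]
    _ ↔ ∃ c ∈ dnf ψ true, ∃ a, ∀ l ∈ c.map (Literal.relabel lastToNone),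
          l.Realize (Option.elim' a (Sum.elim v xs)) := by
        simp only [List.forall_mem_map, Literal.realize_relabel, elim'_comp_lastToNone]
        exact exists_comm.trans (exists_congr fun _ => exists_and_left)
    _ ↔ _ := by simp only [exists_realize_iff_exists_valid hM]

theorem exists_isQF_iff (φ : L.BoundedFormula α n) :
    ∃ ψ : L.BoundedFormula α n, ψ.IsQF ∧ ∀ (M : Type*) [L.Structure M], ModelsTEmpty L M →
      ∀ (v : α → M) (xs : Fin n → M), φ.Realize v xs ↔ ψ.Realize v xs := by
  induction φ with
  | falsum => exact ⟨_, isQF_bot, fun _ _ _ _ _ => Iff.rfl⟩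
  | equal t₁ t₂ => exact ⟨_, (IsAtomic.equal t₁ t₂).isQF, fun _ _ _ _ _ => Iff.rfl⟩
  | rel R ts => exact ⟨_, (IsAtomic.rel R ts).isQF, fun _ _ _ _ _ => Iff.rfl⟩
  | imp φ₁ φ₂ ih₁ ih₂ =>
    obtain ⟨ψ₁, hψ₁, h₁⟩ := ih₁
    obtain ⟨ψ₂, hψ₂, h₂⟩ := ih₂
    exact ⟨ψ₁.imp ψ₂, hψ₁.imp hψ₂, fun M _ hM v xs => by
      simp only [realize_imp, h₁ M hM, h₂ M hM]⟩
  | all φ ih =>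
    obtain ⟨ψ, hψ, h⟩ := ih
    obtain ⟨θ, hθ, hex⟩ := exists_isQF_iff_exists ψ.not hψ.not
    refine ⟨θ.not, hθ.not, fun M _ hM v xs => ?_⟩
    rw [realize_all, realize_not, ← hex M hM]
    simp only [realize_not, h M hM, not_exists, not_not]

end Elimination

end TEmpty

/-- `T^∅_L` has quantifier elimination: every `L`-formula is equivalent,
in every model of `T^∅_L`, to a quantifier-free `L`-formula in the same free variables. -/
theorem tEmpty_quantifier_elimination (L : FirstOrder.Language.{v, w}) (k : ℕ)
    (φ : L.Formula (Fin k)) :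
    ∃ ψ : L.Formula (Fin k), BoundedFormula.IsQF ψ ∧
      ∀ (M : Type u) [L.Structure M], ModelsTEmpty L M →
        ∀ v : Fin k → M, φ.Realize v ↔ ψ.Realize v := by
  obtain ⟨ψ, hψ, h⟩ := TEmpty.exists_isQF_iff φ
  exact ⟨ψ, hψ, fun M _ hM v => h M hM v default⟩
end

section
/- Let Δ be an extension diagram in (x̄, ȳ) and let A be an L-structure. If ā is a tuple of pairwise distinct elements of A of the same length as x̄, then there is an L-structure B containing A as a substructure and a tuple b̄ of elements of B of the same length as ȳ such that B ⊨ φ_Δ(ā, b̄). -/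
open FirstOrder FirstOrder.Language

universe u v w

namespace ExtAux

universe r
variable {L : FirstOrder.Language.{v, w}} {m n : ℕ}

/-- The canonical assignment into the extended carrier `ULift (A ⊕ Fin n)`. -/
def e (A : Type u) (a : Fin m → A) (n : ℕ) :
    Fin m ⊕ Fin n → ULift.{r} (A ⊕ Fin n) :=
  fun s => ⟨Sum.elim (fun i => Sum.inl (a i)) Sum.inr s⟩

theorem e_inj {A : Type u} {a : Fin m → A} (ha : Function.Injective a) :
    Function.Injective (e (m := m) A a n) := by
  intro s t h
  have h' := congrArg ULift.down h
  simp only [e] at h'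
  cases s <;> cases t <;> simp_all [ha.eq_iff]

open scoped Classical in
/-- Interpretation of function symbols on the extended carrier. -/
noncomputable def extFun (Δ : Set (FlatFormula L (Fin m ⊕ Fin n))) (A : Type u)
    [L.Structure A] (a : Fin m → A) {k : ℕ} (f : L.Functions k)
    (t : Fin k → ULift.{r} (A ⊕ Fin n)) : ULift.{r} (A ⊕ Fin n) :=
  if h : ∃ p : (Fin k → Fin m ⊕ Fin n) × (Fin m ⊕ Fin n),
      t = e A a n ∘ p.1 ∧ FlatFormula.func f p.1 p.2 ∈ Δ then
    e A a n h.choose.2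
  else if h2 : ∃ w : Fin k → A, t = fun i => ⟨Sum.inl (w i)⟩ then
    ⟨Sum.inl (Structure.funMap f h2.choose)⟩
  else
    t ⟨0, Nat.pos_of_ne_zero (fun hk => h2
      ⟨fun i => (Fin.elim0 (hk ▸ i)), funext fun i => (Fin.elim0 (hk ▸ i))⟩)⟩

/-- Interpretation of relation symbols on the extended carrier. -/
def extRel (Δ : Set (FlatFormula L (Fin m ⊕ Fin n))) (A : Type u)
    [L.Structure A] (a : Fin m → A) {k : ℕ} (R : L.Relations k)
    (t : Fin k → ULift.{r} (A ⊕ Fin n)) : Prop :=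
  (∃ z : Fin k → Fin m ⊕ Fin n, t = e A a n ∘ z ∧ FlatFormula.rel R z true ∈ Δ) ∨
  (∃ w : Fin k → A, t = (fun i => ⟨Sum.inl (w i)⟩) ∧ Structure.RelMap R w)

noncomputable def extStruc (Δ : Set (FlatFormula L (Fin m ⊕ Fin n))) (A : Type u)
    [L.Structure A] (a : Fin m → A) : L.Structure (ULift.{r} (A ⊕ Fin n)) :=
  ⟨fun f t => extFun Δ A a f t, fun R t => extRel Δ A a R t⟩

/-- If a flat formula's argument tuple mentions a right variable, then the tuple
`e A a n ∘ z` is not of the form `inl ∘ w`. -/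
theorem not_inl_of_mentionsRight {A : Type u} {a : Fin m → A} {k : ℕ}
    {z : Fin k → Fin m ⊕ Fin n} (hz : ∃ i, (z i).isRight)
    (t : Fin k → ULift.{r} (A ⊕ Fin n)) (ht : ∀ i, ∃ x : A, t i = ⟨Sum.inl x⟩) :
    t ≠ e A a n ∘ z := by
  intro hw
  obtain ⟨i, hi⟩ := hz
  obtain ⟨x, hx⟩ := ht i
  have h1 := congrFun hw i
  rw [hx, Function.comp_apply] at h1
  rcases hzi : z i with j | j
  · rw [hzi] at hi; simp at hi
  · rw [hzi] at h1; simp [e] at h1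

end ExtAux

/-- If `Δ` is an extension diagram in `(x̄, ȳ)`, `A` is an `L`-structure
and `ā` is a tuple of pairwise distinct elements of `A` of the same length as `x̄`, then
there are an `L`-structure `B` containing `A` as a substructure and a tuple `b̄` from `B`
with `B ⊨ φ_Δ(ā, b̄)`. -/
theorem extensionDiagram_realizable_in_extension (L : FirstOrder.Language.{v, w})
    (m n : ℕ) (Δ : Set (FlatFormula L (Fin m ⊕ Fin n))) (hΔ : IsExtensionDiagram Δ)
    (A : Type u) [L.Structure A] (a : Fin m → A) (ha : Function.Injective a) :
    ∃ (B : BStructure.{max u v w} L) (g : A ↪[L] B) (b : Fin n → B.carrier),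
      RealizesExtDiagram Δ (fun i => g (a i)) b := by
  classical
  letI strB : L.Structure (ULift.{max v w} (A ⊕ Fin n)) := ExtAux.extStruc Δ A a
  -- the embedding `A ↪[L] B`
  have key_not_match : ∀ {k : ℕ} (f : L.Functions k) (x : Fin k → A),
      ¬ ∃ p : (Fin k → Fin m ⊕ Fin n) × (Fin m ⊕ Fin n),
        (fun i => (⟨Sum.inl (x i)⟩ : ULift.{max v w} (A ⊕ Fin n))) = ExtAux.e A a n ∘ p.1 ∧
          FlatFormula.func f p.1 p.2 ∈ Δ := by
    rintro k f x ⟨p, hp1, hp2⟩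
    exact ExtAux.not_inl_of_mentionsRight (hΔ.2.2 _ hp2) _ (fun i => ⟨x i, rfl⟩) hp1
  let g : A ↪[L] ULift.{max v w} (A ⊕ Fin n) :=
    { toFun := fun x => ⟨Sum.inl x⟩
      inj' := fun x y h => by simpa using h
      map_fun' := by
        intro k f x
        symm
        show ExtAux.extFun Δ A a f (fun i => (⟨Sum.inl (x i)⟩ : ULift.{max v w} (A ⊕ Fin n))) =
          (⟨Sum.inl (Structure.funMap f x)⟩ : ULift.{max v w} (A ⊕ Fin n))
        rw [ExtAux.extFun, dif_neg (key_not_match f x)]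
        have h2 : ∃ w : Fin k → A,
            (fun i => (⟨Sum.inl (x i)⟩ : ULift.{max v w} (A ⊕ Fin n))) =
              fun i => ⟨Sum.inl (w i)⟩ := ⟨x, rfl⟩
        rw [dif_pos h2]
        have hw : h2.choose = x := by
          funext i
          have := congrFun h2.choose_spec i
          simpa using this.symm
        rw [hw]
      map_rel' := by
        intro k R x
        show ExtAux.extRel Δ A a R _ ↔ _
        constructor
        · rintro (⟨z, hz, hzΔ⟩ | ⟨w, hw, hR⟩)
          · exact absurd hz
              (ExtAux.not_inl_of_mentionsRight (hΔ.2.2 _ hzΔ) _ (fun i => ⟨x i, rfl⟩))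
          · have hwx : w = x := by
              funext i
              have := congrFun hw i
              simpa using this.symm
            exact hwx ▸ hR
        · intro hR
          exact Or.inr ⟨x, rfl, hR⟩ }
  refine ⟨⟨ULift.{max v w} (A ⊕ Fin n)⟩, g, fun j => ⟨Sum.inr j⟩, ?_, ?_⟩
  · -- all formulas of Δ are realized
    have hv : Sum.elim (fun i => g (a i)) (fun j : Fin n =>
        (⟨Sum.inr j⟩ : ULift.{max v w} (A ⊕ Fin n))) = ExtAux.e A a n := by
      funext s; cases s <;> rfl
    intro φ hφ
    rw [hv]
    cases φ with
    | rel R z pos =>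
      show (Structure.RelMap R (fun i => ExtAux.e A a n (z i)) ↔ pos = true)
      show (ExtAux.extRel Δ A a R (fun i => ExtAux.e A a n (z i)) ↔ pos = true)
      cases pos with
      | true => simp only [iff_true]; exact Or.inl ⟨z, rfl, hφ⟩
      | false =>
        simp only [Bool.false_eq_true, iff_false]
        rintro (⟨z₀, hz₀, hz₀Δ⟩ | ⟨w, hw, _⟩)
        · have hzz : z = z₀ := by
            funext i
            exact ExtAux.e_inj ha (congrFun hz₀ i)
          exact hΔ.2.1.1 R z ⟨hzz ▸ hz₀Δ, hφ⟩
        · exact ExtAux.not_inl_of_mentionsRight (hΔ.2.2 _ hφ) _ (fun i => ⟨w i, rfl⟩) hw.symm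
    | func f z z' =>
      show Structure.funMap f (fun i => ExtAux.e A a n (z i)) = ExtAux.e A a n z'
      show ExtAux.extFun Δ A a f (fun i => ExtAux.e A a n (z i)) = ExtAux.e A a n z'
      have h : ∃ p : (Fin _ → Fin m ⊕ Fin n) × (Fin m ⊕ Fin n),
          (fun i => ExtAux.e A a n (z i)) = ExtAux.e A a n ∘ p.1 ∧
            FlatFormula.func f p.1 p.2 ∈ Δ := ⟨(z, z'), rfl, hφ⟩
      rw [ExtAux.extFun, dif_pos h]
      obtain ⟨hc1, hc2⟩ := h.choose_spec
      have hzz : z = h.choose.1 := by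
        funext i
        exact ExtAux.e_inj ha (congrFun hc1 i)
      have hφ' : FlatFormula.func f h.choose.1 z' ∈ Δ := hzz ▸ hφ
      have heq : z' = h.choose.2 := hΔ.2.1.2 f h.choose.1 z' h.choose.2 hφ' hc2
      exact congrArg (ExtAux.e A a n) heq.symm
  · -- injectivity of the combined tuple
    have hv : Sum.elim (fun i => g (a i)) (fun j : Fin n =>
        (⟨Sum.inr j⟩ : ULift.{max v w} (A ⊕ Fin n))) = ExtAux.e A a n := by
      funext s; cases s <;> rfl
    rw [hv]
    exact ExtAux.e_inj ha
end

section
/- If an L-structure A is not existentially closed, then there exist a tuple ā of pairwise distinct elements of A and an extension diagram Δ in (x̄, ȳ), with x̄ of the same length as ā, such that A ⊨ ¬∃ȳ φ_Δ(ā, ȳ). -/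
open FirstOrder FirstOrder.Language

universe u v w

/-! If an extension `B ⊇ A` realizes a quantifier-free `φ(ā, ȳ)` by `b̄` while `A` does not,
record the flat diagram in `B` of every evaluation step of `φ` at `(ā, b̄)`: the values of the
subterms under function symbols and the truth values of the relation atoms. Only finitely
many elements of `B` occur; those in `A` become the `x̄`, the others the `ȳ`, and `Δ` is the part
of the diagram mentioning some `ȳ`. A realization of `Δ` in `A` by pairwise distinct elements,
together with the identity on the elements of `A` (where the part not mentioning `ȳ` holds
because `A` is a substructure), is an injective map from those elements to `A` respecting every
evaluation step of `φ`, so it carries `b̄` to a witness of `φ(ā, ȳ)` in `A`. -/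

open Function Set

namespace FlatFormula

variable {L : FirstOrder.Language.{v, w}} {V W M : Type*} [L.Structure M]

def map (f : V → W) : FlatFormula L V → FlatFormula L W
  | .rel R z pos => .rel R (f ∘ z) pos
  | .func F z z' => .func F (f ∘ z) (f z')

def vars : FlatFormula L V → Set V
  | .rel _ z _ => range z
  | .func _ z z' => insert z' (range z)

theorem vars_finite (ψ : FlatFormula L V) : ψ.vars.Finite := by
  cases ψ with
  | rel R z pos => exact finite_range z
  | func F z z' => exact (finite_range z).insert z'

theorem realize_map {f : V → W} {v : W → M} (ψ : FlatFormula L V) :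
    (ψ.map f).Realize v ↔ ψ.Realize (v ∘ f) := by
  cases ψ <;> rfl

theorem map_injective {f : V → W} (hf : Injective f) : Injective (map (L := L) f) := by
  rintro (⟨R, z, p⟩ | ⟨F, z, z'⟩) (⟨R', y, p'⟩ | ⟨F', y, y'⟩) h <;>
    simp only [map, rel.injEq, func.injEq, reduceCtorEq] at h
  · obtain ⟨rfl, rfl, h, rfl⟩ := h
    rw [heq_eq_eq] at h
    rw [hf.comp_left h]
  · obtain ⟨rfl, rfl, h, h'⟩ := h
    rw [heq_eq_eq] at h
    rw [hf.comp_left h, hf h']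

theorem exists_map_eq {f : V → W} {ψ : FlatFormula L W} (hψ : ψ.vars ⊆ range f) :
    ∃ ψ₀ : FlatFormula L V, ψ₀.map f = ψ := by
  cases ψ with
  | rel R z pos =>
    choose k hk using fun i => hψ (mem_range_self i)
    exact ⟨.rel R k pos, by simp only [map, comp_def, hk]⟩
  | func F z z' =>
    choose k hk using fun i => hψ (mem_insert_of_mem _ (mem_range_self i))
    obtain ⟨k', hk'⟩ := hψ (mem_insert z' _)
    exact ⟨.func F k k', by simp only [map, comp_def, hk, hk']⟩

end FlatFormula

theorem FlatConsistent.of_forall_realize {L : FirstOrder.Language.{v, w}} {V M : Type*}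
    [L.Structure M] {Δ : Set (FlatFormula L V)} {v : V → M} (hv : Injective v)
    (hΔ : ∀ ψ ∈ Δ, ψ.Realize v) : FlatConsistent Δ := by
  refine ⟨fun R z h => ?_, fun F z z₁ z₂ h₁ h₂ => hv ((hΔ _ h₁).symm.trans (hΔ _ h₂))⟩
  have htrue := hΔ _ h.1
  have hfalse := hΔ _ h.2
  simp only [FlatFormula.Realize, Bool.false_eq_true, iff_false, iff_true] at htrue hfalse
  exact hfalse htrue

namespace FirstOrder.Language

variable {L : FirstOrder.Language.{v, w}} {α M N : Type*} [L.Structure M] [L.Structure N]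

namespace Term

/-- The variables of this flat diagram are the elements of `M` themselves. -/
def flatDiagram (v : α → M) : L.Term α → Set (FlatFormula L M)
  | var _ => ∅
  | func f ts =>
      insert (.func f (fun i => (ts i).realize v) ((func f ts).realize v))
        (⋃ i, (ts i).flatDiagram v)

theorem flatDiagram_finite (v : α → M) (t : L.Term α) : (t.flatDiagram v).Finite := by
  induction t with
  | var => exact finite_empty
  | func f ts ih => exact (finite_iUnion ih).insert _

theorem realize_id_of_mem_flatDiagram {v : α → M} {t : L.Term α} {ψ : FlatFormula L M}
    (hψ : ψ ∈ t.flatDiagram v) : ψ.Realize id := by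
  induction t with
  | var => exact hψ.elim
  | func f ts ih =>
    rcases hψ with rfl | hψ
    · rfl
    · obtain ⟨i, hi⟩ := mem_iUnion.1 hψ
      exact ih i hi

theorem realize_comp_of_flatDiagram {v : α → M} {h : M → N} {t : L.Term α}
    (hD : ∀ ψ ∈ t.flatDiagram v, ψ.Realize h) : t.realize (h ∘ v) = h (t.realize v) := by
  induction t with
  | var => rfl
  | func f ts ih =>
    have hts i : (ts i).realize (h ∘ v) = h ((ts i).realize v) :=
      ih i fun ψ hψ => hD ψ (mem_insert_of_mem _ (mem_iUnion_of_mem i hψ))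
    simp only [realize_func, hts]
    exact hD _ (mem_insert _ _)

theorem realize_mem_of_flatDiagram_subset {v : α → M} {t : L.Term α} {D : Set (FlatFormula L M)}
    (hD : t.flatDiagram v ⊆ D) : t.realize v ∈ range v ∪ ⋃ ψ ∈ D, ψ.vars := by
  cases t with
  | var x => exact Or.inl (mem_range_self x)
  | func f ts => exact Or.inr (mem_biUnion (hD (mem_insert _ _)) (mem_insert _ _))

end Term

namespace BoundedFormula

variable {n : ℕ}

open Classical in
def flatDiagram (v : α → M) (xs : Fin n → M) : L.BoundedFormula α n → Set (FlatFormula L M)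
  | falsum => ∅
  | equal t₁ t₂ => t₁.flatDiagram (Sum.elim v xs) ∪ t₂.flatDiagram (Sum.elim v xs)
  | rel R ts =>
      insert (.rel R (fun i => (ts i).realize (Sum.elim v xs))
          (decide (Structure.RelMap R fun i => (ts i).realize (Sum.elim v xs))))
        (⋃ i, (ts i).flatDiagram (Sum.elim v xs))
  | imp φ ψ => φ.flatDiagram v xs ∪ ψ.flatDiagram v xs
  | all _ => ∅

theorem flatDiagram_finite (v : α → M) (xs : Fin n → M) :
    ∀ φ : L.BoundedFormula α n, (φ.flatDiagram v xs).Finite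
  | falsum => finite_empty
  | equal t₁ t₂ => (t₁.flatDiagram_finite _).union (t₂.flatDiagram_finite _)
  | rel _ ts => (finite_iUnion fun i => (ts i).flatDiagram_finite _).insert _
  | imp φ ψ => (φ.flatDiagram_finite v xs).union (ψ.flatDiagram_finite v xs)
  | all _ => finite_empty

theorem realize_id_of_mem_flatDiagram {v : α → M} {xs : Fin n → M} {ψ : FlatFormula L M} :
    ∀ {φ : L.BoundedFormula α n}, ψ ∈ φ.flatDiagram v xs → ψ.Realize id
  | falsum, hψ => hψ.elim
  | equal _ _, hψ => hψ.elim Term.realize_id_of_mem_flatDiagram Term.realize_id_of_mem_flatDiagram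
  | rel _ _, hψ => by
    rcases hψ with rfl | hψ
    · classical exact decide_eq_true_iff.symm
    · obtain ⟨i, hi⟩ := mem_iUnion.1 hψ
      exact Term.realize_id_of_mem_flatDiagram hi
  | imp _ _, hψ => hψ.elim realize_id_of_mem_flatDiagram realize_id_of_mem_flatDiagram
  | all _, hψ => hψ.elim

theorem realize_comp_iff_of_flatDiagram {φ : L.BoundedFormula α n} (hφ : φ.IsQF)
    {v : α → M} {xs : Fin n → M} {h : M → N}
    (hD : ∀ ψ ∈ φ.flatDiagram v xs, ψ.Realize h)
    (hinj : InjOn h (range (Sum.elim v xs) ∪ ⋃ ψ ∈ φ.flatDiagram v xs, ψ.vars)) :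
    φ.Realize (h ∘ v) (h ∘ xs) ↔ φ.Realize v xs := by
  induction hφ with
  | falsum => rfl
  | of_isAtomic hatom =>
    cases hatom with
    | equal t₁ t₂ =>
      have hD₁ ψ (hψ : ψ ∈ t₁.flatDiagram _) := hD ψ (Or.inl hψ)
      have hD₂ ψ (hψ : ψ ∈ t₂.flatDiagram _) := hD ψ (Or.inr hψ)
      rw [realize_bdEqual, realize_bdEqual, ← Sum.comp_elim,
        Term.realize_comp_of_flatDiagram hD₁, Term.realize_comp_of_flatDiagram hD₂]
      exact hinj.eq_iff (Term.realize_mem_of_flatDiagram_subset subset_union_left)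
        (Term.realize_mem_of_flatDiagram_subset subset_union_right)
    | rel R ts =>
      have hts i : (ts i).realize (h ∘ Sum.elim v xs) = h ((ts i).realize (Sum.elim v xs)) :=
        Term.realize_comp_of_flatDiagram fun ψ hψ =>
          hD ψ (mem_insert_of_mem _ (mem_iUnion_of_mem i hψ))
      rw [realize_rel, realize_rel, ← Sum.comp_elim]
      simp only [hts]
      classical exact (hD _ (mem_insert _ _)).trans decide_eq_true_iff
  | imp _ _ ih₁ ih₂ =>
    have hvars {D D' : Set (FlatFormula L M)} (h : D ⊆ D') :
        range (Sum.elim v xs) ∪ ⋃ ψ ∈ D, ψ.vars ⊆ range (Sum.elim v xs) ∪ ⋃ ψ ∈ D', ψ.vars :=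
      union_subset_union_right _ (biUnion_subset_biUnion_left h)
    rw [realize_imp, realize_imp,
      ih₁ (fun ψ hψ => hD ψ (Or.inl hψ)) (hinj.mono (hvars subset_union_left)),
      ih₂ (fun ψ hψ => hD ψ (Or.inr hψ)) (hinj.mono (hvars subset_union_right))]

end BoundedFormula

end FirstOrder.Language

theorem exists_injective_sumElim_range_eq {A B : Type*} {g : A → B} (hg : Injective g)
    {C : Set B} (hC : C.Finite) :
    ∃ (m n : ℕ) (a : Fin m → A) (c : Fin n → B),
      Injective (Sum.elim (g ∘ a) c) ∧ range (Sum.elim (g ∘ a) c) = C ∧ ∀ j, c j ∉ range g := by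
  obtain ⟨m, a, ha⟩ := (hC.preimage hg.injOn).fin_embedding
  obtain ⟨n, c, hc⟩ := (hC.sdiff (t := range g)).fin_embedding
  have hc' j : c j ∈ C \ range g := hc ▸ mem_range_self j
  refine ⟨m, n, a, c, (hg.comp a.injective).sumElim c.injective fun i j h => (hc' j).2 ⟨_, h⟩,
    ?_, fun j => (hc' j).2⟩
  rw [Set.Sum.elim_range, range_comp, ha, hc, image_preimage_eq_inter_range,
    inter_union_sdiff]

section

variable {L : FirstOrder.Language.{v, w}} {A B : Type*} [L.Structure A] [L.Structure B]

def extDiagramOf {α β : Type u} (ι : α ⊕ β → B) (D : Set (FlatFormula L B)) :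
    Set (FlatFormula L (α ⊕ β)) :=
  {ψ | ψ.map ι ∈ D ∧ ψ.MentionsRight}

theorem isExtensionDiagram_extDiagramOf {m n : ℕ} {ι : Fin m ⊕ Fin n → B} (hι : Injective ι)
    {D : Set (FlatFormula L B)} (hD : D.Finite) (hDreal : ∀ ψ ∈ D, ψ.Realize id) :
    IsExtensionDiagram (extDiagramOf ι D) :=
  ⟨(hD.preimage (FlatFormula.map_injective hι).injOn).subset fun _ hψ => hψ.1,
    .of_forall_realize hι fun ψ hψ => (ψ.realize_map (f := ι) (v := id)).1 (hDreal _ hψ.1),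
    fun _ hψ => hψ.2⟩

theorem FlatFormula.realize_sumElim_of_not_mentionsRight {α β : Type u} {g : A ↪[L] B}
    {a : α → A} {b : β → A} {c : β → B} (hc : ∀ j, c j ∉ range g)
    {ψ : FlatFormula L (α ⊕ β)} (hψ : ¬ψ.MentionsRight)
    (hreal : ψ.Realize (Sum.elim (g ∘ a) c)) : ψ.Realize (Sum.elim a b) := by
  have hleft {z : Sum α β} (hz : ¬z.isRight) : Sum.elim (g ∘ a) c z = g (Sum.elim a b z) := by
    cases z with
    | inl i => rfl
    | inr j => exact absurd rfl hz
  cases ψ with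
  | rel R z pos =>
    simp only [MentionsRight, not_exists] at hψ
    simp only [Realize, hleft (hψ _)] at hreal ⊢
    exact (g.map_rel R _).symm.trans hreal
  | func F z z' =>
    simp only [MentionsRight, not_exists] at hψ
    simp only [Realize, hleft (hψ _)] at hreal ⊢
    rw [← comp_def g, ← g.map_fun] at hreal
    cases z' with
    | inl i => exact g.injective hreal
    | inr j => exact absurd ⟨_, hreal⟩ (hc j)

theorem realize_of_map_mem_of_realizesExtDiagram {m n : ℕ} {g : A ↪[L] B} {a : Fin m → A}
    {b : Fin n → A} {c : Fin n → B} (hc : ∀ j, c j ∉ range g) {D : Set (FlatFormula L B)}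
    (hDreal : ∀ ψ ∈ D, ψ.Realize id)
    (hb : RealizesExtDiagram (extDiagramOf (Sum.elim (g ∘ a) c) D) a b)
    {ψ : FlatFormula L (Fin m ⊕ Fin n)} (hψ : ψ.map (Sum.elim (g ∘ a) c) ∈ D) :
    ψ.Realize (Sum.elim a b) := by
  by_cases hright : ψ.MentionsRight
  · exact hb.1 ψ ⟨hψ, hright⟩
  · exact ψ.realize_sumElim_of_not_mentionsRight hc hright
      ((ψ.realize_map (v := id)).1 (hDreal _ hψ))

theorem exists_realize_flatDiagram_of_realizesExtDiagram [Nonempty A] {m n : ℕ} {g : A ↪[L] B}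
    {a : Fin m → A} {b : Fin n → A} {c : Fin n → B} (hι : Injective (Sum.elim (g ∘ a) c))
    (hc : ∀ j, c j ∉ range g) {D : Set (FlatFormula L B)} (hDreal : ∀ ψ ∈ D, ψ.Realize id)
    (hDvars : ∀ ψ ∈ D, ψ.vars ⊆ range (Sum.elim (g ∘ a) c))
    (hb : RealizesExtDiagram (extDiagramOf (Sum.elim (g ∘ a) c) D) a b) :
    ∃ h : B → A, (∀ ψ ∈ D, ψ.Realize h) ∧ InjOn h (range (Sum.elim (g ∘ a) c)) ∧
      ∀ x, g x ∈ range (Sum.elim (g ∘ a) c) → h (g x) = x := by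
  set ι := Sum.elim (g ∘ a) c
  set h := extend ι (Sum.elim a b) fun _ => Classical.arbitrary A
  have hι_h x : h (ι x) = Sum.elim a b x := hι.extend_apply _ _ x
  refine ⟨h, fun ψ hψ => ?_, ?_, ?_⟩
  · obtain ⟨ψ₀, rfl⟩ := FlatFormula.exists_map_eq (hDvars ψ hψ)
    rw [ψ₀.realize_map, comp_def, funext hι_h]
    exact realize_of_map_mem_of_realizesExtDiagram hc hDreal hb hψ
  · rintro _ ⟨x, rfl⟩ _ ⟨y, rfl⟩ hxy
    rw [hι_h, hι_h] at hxy
    rw [hb.2 hxy]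
  · rintro x ⟨i | j, hi⟩
    · rw [← hi, hι_h]
      exact g.injective hi
    · exact absurd ⟨x, hi.symm⟩ (hc j)

end

/-- If an `L`-structure `A` is not existentially closed, then there are
a tuple `ā` of pairwise distinct elements of `A` and an extension diagram `Δ` in `(x̄, ȳ)`
such that `A ⊨ ¬ ∃ ȳ φ_Δ(ā, ȳ)`. -/
theorem not_existentiallyClosed_extensionDiagram (L : FirstOrder.Language.{v, w})
    (A : Type u) [L.Structure A] (hA : ¬ IsExistentiallyClosed L A) :
    ∃ (m n : ℕ) (a : Fin m → A), Function.Injective a ∧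
      ∃ Δ : Set (FlatFormula L (Fin m ⊕ Fin n)), IsExtensionDiagram Δ ∧
        ¬ ∃ b : Fin n → A, RealizesExtDiagram Δ a b := by
  rcases isEmpty_or_nonempty A with hA₀ | hA₀
  · exact ⟨0, 1, finZeroElim, fun i => i.elim0, ∅,
      ⟨finite_empty, ⟨fun _ _ h => h.1, fun _ _ _ _ h => h.elim⟩, fun _ h => h.elim⟩,
      fun ⟨b, _⟩ => isEmptyElim (b 0)⟩
  simp only [IsExistentiallyClosed, not_forall, exists_prop] at hA
  obtain ⟨B, _, g, m₀, n₀, φ, hφ, a₀, ⟨b₀, hb₀⟩, hA⟩ := hA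
  set w := Sum.elim (g ∘ a₀) b₀
  set D := φ.flatDiagram w default
  have hDreal ψ (hψ : ψ ∈ D) : ψ.Realize id := BoundedFormula.realize_id_of_mem_flatDiagram hψ
  have hC : (range (Sum.elim w (default : Fin 0 → B)) ∪ ⋃ ψ ∈ D, ψ.vars).Finite :=
    (finite_range _).union ((φ.flatDiagram_finite w default).biUnion fun ψ _ => ψ.vars_finite)
  obtain ⟨m, n, a, c, hι, hrange, hc⟩ := exists_injective_sumElim_range_eq g.injective hC
  refine ⟨m, n, a, (show Injective (g ∘ a) from hι.comp Sum.inl_injective).of_comp,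
    extDiagramOf (Sum.elim (g ∘ a) c) D,
    isExtensionDiagram_extDiagramOf hι (φ.flatDiagram_finite w default) hDreal,
    fun ⟨b, hb⟩ => ?_⟩
  obtain ⟨h, hD, hinj, hg⟩ := exists_realize_flatDiagram_of_realizesExtDiagram hι hc hDreal
    (fun ψ hψ => hrange ▸ subset_union_of_subset_right (subset_biUnion_of_mem hψ) _) hb
  have hw : h ∘ w = Sum.elim a₀ (h ∘ b₀) := by
    rw [Sum.comp_elim]
    congr 1
    exact funext fun i => hg _ (hrange ▸ Or.inl ⟨Sum.inl (Sum.inl i), rfl⟩)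
  refine hA ⟨h ∘ b₀, ?_⟩
  have := (φ.realize_comp_iff_of_flatDiagram hφ hD (hrange ▸ hinj)).2 hb₀
  rwa [hw, Subsingleton.elim (h ∘ default) default] at this
end

section
/- The class of L-structures has the disjoint amalgamation property: for any L-structures A, B, C and any L-embeddings f₁ : A → B and f₂ : A → C, there exist an L-structure D and L-embeddings g₁ : B → D and g₂ : C → D such that g₁ ∘ f₁ = g₂ ∘ f₂ and the images of g₁ and g₂ intersect exactly in the image of g₁ ∘ f₁ (i.e., g₁(B) ∩ g₂(C) = g₁(f₁(A))). -/
open FirstOrder FirstOrder.Language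

universe u v w

section Amalg

open FirstOrder.Language.Structure

attribute [local instance] Classical.propDecidable

variable {L : FirstOrder.Language.{v, w}} {A B C : Type u}
  [L.Structure A] [L.Structure B] [L.Structure C]
  (f₁ : A ↪[L] B) (f₂ : A ↪[L] C)

/-- The map from `C` into the amalgam carrier `B ⊕ {c : C // c ∉ Set.range ⇑f₂}`. -/
noncomputable def amalgMap (c : C) : B ⊕ {c : C // c ∉ Set.range ⇑f₂} :=
  if h : c ∈ Set.range ⇑f₂ then Sum.inl (f₁ h.choose) else Sum.inr ⟨c, h⟩

lemma amalgMap_apply_f₂ (a : A) : amalgMap f₁ f₂ (f₂ a) = Sum.inl (f₁ a) := by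
  have h : f₂ a ∈ Set.range ⇑f₂ := ⟨a, rfl⟩
  rw [amalgMap, dif_pos h]
  exact congrArg (Sum.inl ∘ ⇑f₁) (f₂.injective h.choose_spec)

lemma amalgMap_inl {c : C} {b : B} (h : amalgMap f₁ f₂ c = Sum.inl b) :
    ∃ a, c = f₂ a ∧ b = f₁ a := by
  by_cases hc : c ∈ Set.range ⇑f₂
  · obtain ⟨a, rfl⟩ := hc
    rw [amalgMap_apply_f₂] at h
    exact ⟨a, rfl, (Sum.inl.inj h).symm⟩
  · rw [amalgMap, dif_neg hc] at h
    simp at h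

lemma amalgMap_injective : Function.Injective (amalgMap f₁ f₂) := by
  intro c₁ c₂ h
  by_cases h1 : c₁ ∈ Set.range ⇑f₂ <;> by_cases h2 : c₂ ∈ Set.range ⇑f₂
  · obtain ⟨a₁, rfl⟩ := h1; obtain ⟨a₂, rfl⟩ := h2
    rw [amalgMap_apply_f₂, amalgMap_apply_f₂] at h
    exact congrArg _ (f₁.injective (Sum.inl.inj h))
  · simp only [amalgMap, dif_pos h1, dif_neg h2] at h
    simp at h
  · simp only [amalgMap, dif_neg h1, dif_pos h2] at h
    simp at h
  · simp only [amalgMap, dif_neg h1, dif_neg h2] at h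
    simpa using h

lemma amalgMap_tuple {n : ℕ} {c : Fin n → C} {b : Fin n → B}
    (h : (Sum.inl ∘ b : Fin n → B ⊕ {c : C // c ∉ Set.range ⇑f₂}) = amalgMap f₁ f₂ ∘ c) :
    ∃ a : Fin n → A, b = ⇑f₁ ∘ a ∧ c = ⇑f₂ ∘ a := by
  have key : ∀ i, ∃ a, c i = f₂ a ∧ b i = f₁ a := fun i =>
    amalgMap_inl f₁ f₂ (congrFun h i).symm
  choose a ha hb using key
  exact ⟨a, funext hb, funext ha⟩

/-- The interpretation of function symbols on the amalgam. -/
noncomputable def amalgFunMap {n : ℕ} (f : L.Functions n)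
    (x : Fin n → B ⊕ {c : C // c ∉ Set.range ⇑f₂}) :
    B ⊕ {c : C // c ∉ Set.range ⇑f₂} :=
  if h : ∃ b, x = Sum.inl ∘ b then Sum.inl (funMap f h.choose)
  else if h' : ∃ c, x = amalgMap f₁ f₂ ∘ c then amalgMap f₁ f₂ (funMap f h'.choose)
  else x ⟨0, Nat.pos_of_ne_zero (fun hn => h (by
    subst hn
    exact ⟨Fin.elim0, funext fun i => i.elim0⟩))⟩

/-- The interpretation of relation symbols on the amalgam. -/
def amalgRelMap {n : ℕ} (R : L.Relations n)
    (x : Fin n → B ⊕ {c : C // c ∉ Set.range ⇑f₂}) : Prop :=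
  (∃ b, x = Sum.inl ∘ b ∧ RelMap R b) ∨
  (∃ c, x = amalgMap f₁ f₂ ∘ c ∧ RelMap R c)

lemma amalgFunMap_inl {n : ℕ} (f : L.Functions n) (b : Fin n → B) :
    amalgFunMap f₁ f₂ f (Sum.inl ∘ b) = Sum.inl (funMap f b) := by
  have h : ∃ b', (Sum.inl ∘ b : Fin n → B ⊕ {c : C // c ∉ Set.range ⇑f₂})
      = Sum.inl ∘ b' := ⟨b, rfl⟩
  have hb : h.choose = b := funext fun i => Sum.inl.inj (congrFun h.choose_spec i).symm
  rw [amalgFunMap, dif_pos h, hb]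

lemma amalgFunMap_amalgMap {n : ℕ} (f : L.Functions n) (c : Fin n → C) :
    amalgFunMap f₁ f₂ f (amalgMap f₁ f₂ ∘ c) = amalgMap f₁ f₂ (funMap f c) := by
  rw [amalgFunMap]
  by_cases h : ∃ b, (amalgMap f₁ f₂ ∘ c : Fin n → B ⊕ {c : C // c ∉ Set.range ⇑f₂})
      = Sum.inl ∘ b
  · rw [dif_pos h]
    obtain ⟨a, hba, hca⟩ := amalgMap_tuple f₁ f₂ (h.choose_spec).symm
    rw [hba, hca, ← f₁.map_fun, ← f₂.map_fun, amalgMap_apply_f₂]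
  · rw [dif_neg h]
    have h' : ∃ c', (amalgMap f₁ f₂ ∘ c : Fin n → B ⊕ {c : C // c ∉ Set.range ⇑f₂})
        = amalgMap f₁ f₂ ∘ c' := ⟨c, rfl⟩
    rw [dif_pos h']
    have hc : h'.choose = c := funext fun i =>
      (amalgMap_injective f₁ f₂ (congrFun h'.choose_spec i)).symm
    rw [hc]

lemma amalgRelMap_inl {n : ℕ} (R : L.Relations n) (b : Fin n → B) :
    amalgRelMap f₁ f₂ R (Sum.inl ∘ b) ↔ RelMap R b := by
  rw [amalgRelMap]
  constructor
  · rintro (⟨b', hb', hR⟩ | ⟨c, hc, hR⟩)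
    · have : b' = b := funext fun i => Sum.inl.inj (congrFun hb' i).symm
      rwa [this] at hR
    · obtain ⟨a, hba, hca⟩ := amalgMap_tuple f₁ f₂ hc
      rw [hca, f₂.map_rel] at hR
      rw [hba, f₁.map_rel]
      exact hR
  · intro hR; exact Or.inl ⟨b, rfl, hR⟩

lemma amalgRelMap_amalgMap {n : ℕ} (R : L.Relations n) (c : Fin n → C) :
    amalgRelMap f₁ f₂ R (amalgMap f₁ f₂ ∘ c) ↔ RelMap R c := by
  rw [amalgRelMap]
  constructor
  · rintro (⟨b, hb, hR⟩ | ⟨c', hc', hR⟩)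
    · obtain ⟨a, hba, hca⟩ := amalgMap_tuple f₁ f₂ hb.symm
      rw [hba, f₁.map_rel] at hR
      rw [hca, f₂.map_rel]
      exact hR
    · have : c' = c := funext fun i =>
        (amalgMap_injective f₁ f₂ (congrFun hc' i)).symm
      rwa [this] at hR
  · intro hR; exact Or.inr ⟨c, rfl, hR⟩

/-- The `L`-structure on the amalgam. -/
noncomputable def amalgStructure : L.Structure (B ⊕ {c : C // c ∉ Set.range ⇑f₂}) where
  funMap := amalgFunMap f₁ f₂
  RelMap := amalgRelMap f₁ f₂

end Amalg

/-- The class of `L`-structures has the disjoint amalgamation property. -/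
theorem disjoint_amalgamation (L : FirstOrder.Language.{v, w})
    (A B C : Type u) [L.Structure A] [L.Structure B] [L.Structure C]
    (f₁ : A ↪[L] B) (f₂ : A ↪[L] C) :
    ∃ (D : BStructure.{u} L) (g₁ : B ↪[L] D) (g₂ : C ↪[L] D),
      (∀ x, g₁ (f₁ x) = g₂ (f₂ x)) ∧
      Set.range (⇑g₁) ∩ Set.range (⇑g₂) = Set.range (fun x => g₁ (f₁ x)) := by
  letI SD : L.Structure (B ⊕ {c : C // c ∉ Set.range ⇑f₂}) := amalgStructure f₁ f₂
  refine ⟨{ carrier := B ⊕ {c : C // c ∉ Set.range ⇑f₂}, struc := SD },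
    { toFun := Sum.inl, inj' := Sum.inl_injective,
      map_fun' := fun f x => (amalgFunMap_inl f₁ f₂ f x).symm,
      map_rel' := fun r x => amalgRelMap_inl f₁ f₂ r x },
    { toFun := amalgMap f₁ f₂, inj' := amalgMap_injective f₁ f₂,
      map_fun' := fun f x => (amalgFunMap_amalgMap f₁ f₂ f x).symm,
      map_rel' := fun r x => amalgRelMap_amalgMap f₁ f₂ r x },
    fun a => (amalgMap_apply_f₂ f₁ f₂ a).symm, ?_⟩
  ext d
  constructor
  · rintro ⟨⟨b, rfl⟩, ⟨c, hc⟩⟩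
    obtain ⟨a, hca, hba⟩ := amalgMap_inl f₁ f₂ (hc : amalgMap f₁ f₂ c = Sum.inl b)
    exact ⟨a, by simp [hba]⟩
  · rintro ⟨a, rfl⟩
    exact ⟨⟨f₁ a, rfl⟩, ⟨f₂ a, amalgMap_apply_f₂ f₁ f₂ a⟩⟩
end

section
/- Independence theorem for algebraic independence over arbitrary sets in the generic L-structure, structural form: let C, A, B, C′ be L-structures with distinguished embeddings of C into each of A, B, C′. Suppose D_AB is an L-structure generated by embedded copies of A and B (compatibly over C) whose underlying sets intersect exactly in the image of C; D_AC is an L-structure generated by embedded copies of A and C′ over C intersecting exactly in the image of C; and D_BC is an L-structure generated by embedded copies of B and C′ over C intersecting exactly in the image of C. Then there exist an L-structure E and L-embeddings i_AB : D_AB → E, i_AC : D_AC → E, i_BC : D_BC → E such that i_AB and i_AC agree on the respective copies of A, i_AB and i_BC agree on the respective copies of B, i_AC and i_BC agree on the respective copies of C′ (in particular all three agree on C), and the image under i_AB of the copy of A intersects the image of D_BC exactly in the image of C. -/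
open FirstOrder FirstOrder.Language

universe u v w

/-!
Glue the three structures along their common parts. The intersection hypotheses say exactly that
each square such as `C → A, B → DAB` is a weak pullback of sets. On the level of sets, `DAC` is
glued onto `DAB` along `A`, and then `DBC` onto the result along `B` and `C'` at once; the
weak-pullback squares make these identifications consistent, so that every piece injects and any
two pieces overlap exactly in the copy of their common substructure. Overlaps are therefore
substructures on which the pieces agree, and computing functions and relations inside whichever
piece contains the arguments (using a junk point otherwise) gives a structure in which all three
pieces embed. The last claim comes from pasting the square of `DAB` over `C` with the square of
`DAB` and `DBC` over `B`.
-/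

open Function Set

section WeakPullback

variable {C A B D E : Type*} {eA : C → A} {eB : C → B} {jA : A → D} {jB : B → D}

def IsWeakPullback (eA : C → A) (eB : C → B) (jA : A → D) (jB : B → D) : Prop :=
  ∀ a b, jA a = jB b ↔ ∃ c, eA c = a ∧ eB c = b

theorem isWeakPullback_of_inter_range_eq (hjA : Injective jA) (hjB : Injective jB)
    (hcomm : ∀ c, jA (eA c) = jB (eB c))
    (hint : range jA ∩ range jB = range (fun c => jA (eA c))) :
    IsWeakPullback eA eB jA jB := by
  refine fun a b => ⟨fun h => ?_, fun ⟨c, ha, hb⟩ => ha ▸ hb ▸ hcomm c⟩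
  obtain ⟨c, hc⟩ : jA a ∈ range (fun c => jA (eA c)) := hint ▸ ⟨⟨a, rfl⟩, b, h.symm⟩
  exact ⟨c, hjA hc, hjB ((hcomm c).symm.trans (hc.trans h))⟩

namespace IsWeakPullback

theorem comm (h : IsWeakPullback eA eB jA jB) (c : C) : jA (eA c) = jB (eB c) :=
  (h _ _).2 ⟨c, rfl, rfl⟩

theorem comp_injective (h : IsWeakPullback eA eB jA jB) {f : D → E} (hf : Injective f) :
    IsWeakPullback eA eB (f ∘ jA) (f ∘ jB) :=
  fun a b => hf.eq_iff.trans (h a b)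

theorem paste {P Q : Type*} {lB : B → P} {gD : D → Q} {gP : P → Q}
    (h : IsWeakPullback eA eB jA jB) (h' : IsWeakPullback jB lB gD gP) :
    IsWeakPullback eA (lB ∘ eB) (gD ∘ jA) gP := by
  intro a p
  simp only [comp_apply, h' (jA a) p]
  constructor
  · rintro ⟨b, hb, rfl⟩
    obtain ⟨c, rfl, rfl⟩ := (h a b).1 hb.symm
    exact ⟨c, rfl, rfl⟩
  · rintro ⟨c, rfl, rfl⟩
    exact ⟨eB c, (h.comm c).symm, rfl⟩

theorem range_inter_range (h : IsWeakPullback eA eB jA jB) :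
    range jA ∩ range jB = range (jA ∘ eA) := by
  ext d
  constructor
  · rintro ⟨⟨a, rfl⟩, b, hb⟩
    obtain ⟨c, rfl, -⟩ := (h a b).1 hb.symm
    exact ⟨c, rfl⟩
  · rintro ⟨c, rfl⟩
    exact ⟨⟨eA c, rfl⟩, eB c, (h.comm c).symm⟩

theorem sum_elim_eq_iff {jA' : A → E} {jB' : B → E}
    (h : IsWeakPullback eA eB jA jB) (h' : IsWeakPullback eA eB jA' jB')
    (hjA : Injective jA) (hjB : Injective jB) (hjA' : Injective jA') (hjB' : Injective jB')
    (x y : A ⊕ B) :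
    Sum.elim jA jB x = Sum.elim jA jB y ↔ Sum.elim jA' jB' x = Sum.elim jA' jB' y := by
  rcases x with a | b <;> rcases y with a' | b'
  · simp only [Sum.elim_inl, hjA.eq_iff, hjA'.eq_iff]
  · exact (h a b').trans (h' a b').symm
  · exact eq_comm.trans ((h a' b).trans ((h' a' b).symm.trans eq_comm))
  · simp only [Sum.elim_inr, hjB.eq_iff, hjB'.eq_iff]

end IsWeakPullback

end WeakPullback

section GlueAlong

variable {P D₁ D₂ : Type*} {p₁ : P → D₁} {p₂ : P → D₂}

noncomputable def glueAlong (p₁ : P → D₁) (p₂ : P → D₂) : D₂ → D₁ ⊕ D₂ :=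
  extend p₂ (Sum.inl ∘ p₁) Sum.inr

theorem glueAlong_apply (h : FactorsThrough p₁ p₂) (a : P) :
    glueAlong p₁ p₂ (p₂ a) = Sum.inl (p₁ a) :=
  FactorsThrough.extend_apply (fun _ _ hab => congrArg Sum.inl (h hab)) _ a

theorem glueAlong_apply_of_notMem {y : D₂} (hy : y ∉ range p₂) :
    glueAlong p₁ p₂ y = Sum.inr y :=
  extend_apply' _ _ _ hy

theorem isWeakPullback_glueAlong (h : FactorsThrough p₁ p₂) :
    IsWeakPullback p₁ p₂ Sum.inl (glueAlong p₁ p₂) := by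
  intro x y
  by_cases hy : y ∈ range p₂
  · obtain ⟨a, rfl⟩ := hy
    rw [glueAlong_apply h, Sum.inl.injEq]
    exact ⟨fun hx => ⟨a, hx.symm, rfl⟩, fun ⟨a', ha', hp⟩ => ha' ▸ h hp⟩
  · rw [glueAlong_apply_of_notMem hy]
    exact iff_of_false Sum.inl_ne_inr fun ⟨a, _, ha⟩ => hy ⟨a, ha⟩

theorem glueAlong_injective (h₁ : FactorsThrough p₁ p₂) (h₂ : FactorsThrough p₂ p₁) :
    Injective (glueAlong p₁ p₂) := by
  have key : ∀ a y, glueAlong p₁ p₂ (p₂ a) = glueAlong p₁ p₂ y → p₂ a = y := by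
    intro a y hy
    obtain ⟨a', ha', rfl⟩ :=
      (isWeakPullback_glueAlong h₁ _ _).1 ((glueAlong_apply h₁ a).symm.trans hy)
    exact h₂ ha'.symm
  intro y y' hyy'
  by_cases hy : y ∈ range p₂
  · obtain ⟨a, rfl⟩ := hy
    exact key a y' hyy'
  by_cases hy' : y' ∈ range p₂
  · obtain ⟨a, rfl⟩ := hy'
    exact (key a y hyy'.symm).symm
  rw [glueAlong_apply_of_notMem hy, glueAlong_apply_of_notMem hy'] at hyy'
  exact Sum.inr_injective hyy'

theorem isWeakPullback_glueAlong_of_injective (hp₂ : Injective p₂) :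
    IsWeakPullback p₁ p₂ Sum.inl (glueAlong p₁ p₂) :=
  isWeakPullback_glueAlong (hp₂.factorsThrough _)

theorem glueAlong_injective_of_injective (hp₁ : Injective p₁) (hp₂ : Injective p₂) :
    Injective (glueAlong p₁ p₂) :=
  glueAlong_injective (hp₂.factorsThrough _) (hp₁.factorsThrough _)

end GlueAlong

namespace FirstOrder.Language

open Structure

variable (L : Language.{v, w}) {X : Type*}

def OverlapCompatible {D₁ D₂ : Type*} [L.Structure D₁] [L.Structure D₂]
    (g₁ : D₁ → X) (g₂ : D₂ → X) : Prop :=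
  (∀ {n} (f : L.Functions n) (x : Fin n → D₁) (y : Fin n → D₂),
      g₁ ∘ x = g₂ ∘ y → g₁ (funMap f x) = g₂ (funMap f y)) ∧
  ∀ {n} (r : L.Relations n) (x : Fin n → D₁) (y : Fin n → D₂),
      g₁ ∘ x = g₂ ∘ y → (RelMap r x ↔ RelMap r y)

/-- Tuples lying in a single piece are evaluated there; all others go to the junk point `none`. -/
@[reducible] noncomputable def gluedStructure {ι : Type*} {D : ι → Type*}
    [∀ i, L.Structure (D i)] (g : ∀ i, D i → X) : L.Structure (Option X) where
  funMap {n} f x :=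
    open Classical in
    if h : ∃ i, ∃ d : Fin n → D i, x = some ∘ g i ∘ d
    then some (g h.choose (funMap f h.choose_spec.choose)) else none
  RelMap {n} r x := ∃ i, ∃ d : Fin n → D i, x = some ∘ g i ∘ d ∧ RelMap r d

variable {L} {D₁ D₂ : Type*} [L.Structure D₁] [L.Structure D₂] {g₁ : D₁ → X} {g₂ : D₂ → X}

theorem OverlapCompatible.symm (h : L.OverlapCompatible g₁ g₂) : L.OverlapCompatible g₂ g₁ :=
  ⟨fun f x y hxy => (h.1 f y x hxy.symm).symm, fun r x y hxy => (h.2 r y x hxy.symm).symm⟩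

theorem overlapCompatible_self (hg : Injective g₁) : L.OverlapCompatible g₁ g₁ :=
  ⟨fun f x y hxy => by rw [hg.comp_left hxy], fun r x y hxy => by rw [hg.comp_left hxy]⟩

theorem _root_.IsWeakPullback.overlapCompatible {P : Type*} [L.Structure P]
    {p₁ : P ↪[L] D₁} {p₂ : P ↪[L] D₂} (h : IsWeakPullback p₁ p₂ g₁ g₂) :
    L.OverlapCompatible g₁ g₂ := by
  have common : ∀ {n} (x : Fin n → D₁) (y : Fin n → D₂), g₁ ∘ x = g₂ ∘ y →
      ∃ a : Fin n → P, x = p₁ ∘ a ∧ y = p₂ ∘ a := by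
    intro n x y hxy
    choose a hx hy using fun k => (h (x k) (y k)).1 (congrFun hxy k)
    exact ⟨a, funext fun k => (hx k).symm, funext fun k => (hy k).symm⟩
  constructor
  · intro n f x y hxy
    obtain ⟨a, rfl, rfl⟩ := common x y hxy
    rw [← p₁.map_fun, ← p₂.map_fun]
    exact h.comm _
  · intro n r x y hxy
    obtain ⟨a, rfl, rfl⟩ := common x y hxy
    rw [p₁.map_rel, p₂.map_rel]

theorem exists_embeddings_option_of_overlapCompatible {ι : Type*} {D : ι → Type*}
    [∀ i, L.Structure (D i)] (g : ∀ i, D i → X)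
    (hg : ∀ i, Injective (g i)) (hcompat : ∀ i j, L.OverlapCompatible (g i) (g j)) :
    ∃ _ : L.Structure (Option X), ∀ i, ∃ e : D i ↪[L] Option X, ⇑e = some ∘ g i := by
  classical
  have overlap : ∀ {n i j} {d : Fin n → D i} {d' : Fin n → D j},
      some ∘ g i ∘ d = some ∘ g j ∘ d' → g i ∘ d = g j ∘ d' :=
    fun h => (Option.some_injective X).comp_left h
  let _ := gluedStructure L g
  refine ⟨gluedStructure L g, fun i => ⟨⟨⟨some ∘ g i, (Option.some_injective X).comp (hg i)⟩,
    fun {n} f d => ?_, fun {n} r d => ?_⟩, rfl⟩⟩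
  · change some (g i (funMap f d)) = dite _ _ _
    split
    · next h => exact congrArg some ((hcompat i _).1 f d _ (overlap h.choose_spec.choose_spec))
    · next h => exact absurd ⟨i, d, rfl⟩ h
  · exact ⟨fun ⟨j, d', hd, hr⟩ => ((hcompat i j).2 r d d' (overlap hd)).2 hr,
      fun hr => ⟨i, d, rfl, hr⟩⟩

theorem exists_three_embeddings {D₁ D₂ D₃ X : Type u}
    [L.Structure D₁] [L.Structure D₂] [L.Structure D₃] {g₁ : D₁ → X} {g₂ : D₂ → X} {g₃ : D₃ → X}
    (hg₁ : Injective g₁) (hg₂ : Injective g₂) (hg₃ : Injective g₃)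
    (h₁₂ : L.OverlapCompatible g₁ g₂) (h₁₃ : L.OverlapCompatible g₁ g₃)
    (h₂₃ : L.OverlapCompatible g₂ g₃) :
    ∃ (E : BStructure.{u} L) (f : X → E), Injective f ∧
      ∃ (e₁ : D₁ ↪[L] E) (e₂ : D₂ ↪[L] E) (e₃ : D₃ ↪[L] E),
        ⇑e₁ = f ∘ g₁ ∧ ⇑e₂ = f ∘ g₂ ∧ ⇑e₃ = f ∘ g₃ := by
  let S : Fin 3 → BStructure.{u} L := ![⟨D₁⟩, ⟨D₂⟩, ⟨D₃⟩]
  let g : ∀ i, S i → X := Fin.cons g₁ (Fin.cons g₂ (Fin.cons g₃ finZeroElim))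
  have hg : ∀ i, Injective (g i) := by
    intro i; fin_cases i
    exacts [hg₁, hg₂, hg₃]
  have hcompat : ∀ i j, L.OverlapCompatible (g i) (g j) := by
    intro i j; fin_cases i <;> fin_cases j
    exacts [overlapCompatible_self hg₁, h₁₂, h₁₃, h₁₂.symm, overlapCompatible_self hg₂, h₂₃,
      h₁₃.symm, h₂₃.symm, overlapCompatible_self hg₃]
  obtain ⟨_, he⟩ := exists_embeddings_option_of_overlapCompatible g hg hcompat
  obtain ⟨e₁, h₁⟩ := he 0
  obtain ⟨e₂, h₂⟩ := he 1
  obtain ⟨e₃, h₃⟩ := he 2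
  exact ⟨⟨Option X⟩, some, Option.some_injective X, e₁, e₂, e₃, h₁, h₂, h₃⟩

end FirstOrder.Language

section Amalgam

variable {L : FirstOrder.Language.{v, w}} {C A B C' DAB DAC DBC : Type*}
  [L.Structure C] [L.Structure A] [L.Structure B] [L.Structure C']
  [L.Structure DAB] [L.Structure DAC] [L.Structure DBC]
  {eA : C ↪[L] A} {eB : C ↪[L] B} {eC : C ↪[L] C'}
  (jA : A ↪[L] DAB) (jB : B ↪[L] DAB) (kA : A ↪[L] DAC) (kC : C' ↪[L] DAC)
  (lB : B ↪[L] DBC) (lC : C' ↪[L] DBC)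

/-- `DBC` glued onto `DAB ⊔_A DAC` along `B` and `C'` at once. -/
noncomputable def glueBC : DBC → (DAB ⊕ DAC) ⊕ DBC :=
  glueAlong (Sum.elim (Sum.inl ∘ jB) (glueAlong jA kA ∘ kC)) (Sum.elim lB lC)

variable {jA jB kA kC lB lC}

theorem isWeakPullback_inl_glueAlong (hJ : IsWeakPullback eA eB jA jB)
    (hK : IsWeakPullback eA eC kA kC) :
    IsWeakPullback eB eC (Sum.inl ∘ jB) (glueAlong jA kA ∘ kC) := by
  intro b c'
  rw [comp_apply, comp_apply, isWeakPullback_glueAlong_of_injective kA.injective]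
  constructor
  · rintro ⟨a, hab, hac⟩
    obtain ⟨c, rfl, rfl⟩ := (hK a c').1 hac
    exact ⟨c, jB.injective ((hJ.comm c).symm.trans hab), rfl⟩
  · rintro ⟨c, rfl, rfl⟩
    exact ⟨eA c, hJ.comm c, hK.comm c⟩

theorem sum_elim_glueAlong_eq_iff (hJ : IsWeakPullback eA eB jA jB)
    (hK : IsWeakPullback eA eC kA kC) (hL : IsWeakPullback eB eC lB lC) (x y : B ⊕ C') :
    Sum.elim (Sum.inl ∘ jB) (glueAlong jA kA ∘ kC) x =
        Sum.elim (Sum.inl ∘ jB) (glueAlong jA kA ∘ kC) y ↔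
      Sum.elim lB lC x = Sum.elim lB lC y :=
  (isWeakPullback_inl_glueAlong hJ hK).sum_elim_eq_iff hL
    (Sum.inl_injective.comp jB.injective)
    ((glueAlong_injective_of_injective jA.injective kA.injective).comp kC.injective)
    lB.injective lC.injective x y

theorem isWeakPullback_glueBC (hJ : IsWeakPullback eA eB jA jB)
    (hK : IsWeakPullback eA eC kA kC) (hL : IsWeakPullback eB eC lB lC) :
    IsWeakPullback (Sum.elim (Sum.inl ∘ jB) (glueAlong jA kA ∘ kC)) (Sum.elim lB lC) Sum.inl
      (glueBC jA jB kA kC lB lC) :=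
  isWeakPullback_glueAlong fun x y => (sum_elim_glueAlong_eq_iff hJ hK hL x y).2

theorem glueBC_injective (hJ : IsWeakPullback eA eB jA jB)
    (hK : IsWeakPullback eA eC kA kC) (hL : IsWeakPullback eB eC lB lC) :
    Injective (glueBC jA jB kA kC lB lC) :=
  glueAlong_injective (fun x y => (sum_elim_glueAlong_eq_iff hJ hK hL x y).2)
    (fun x y => (sum_elim_glueAlong_eq_iff hJ hK hL x y).1)

theorem isWeakPullback_inl_inl_glueBC (hJ : IsWeakPullback eA eB jA jB)
    (hK : IsWeakPullback eA eC kA kC) (hL : IsWeakPullback eB eC lB lC) :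
    IsWeakPullback jB lB (Sum.inl ∘ Sum.inl) (glueBC jA jB kA kC lB lC) := by
  intro x z
  rw [comp_apply, isWeakPullback_glueBC hJ hK hL]
  constructor
  · rintro ⟨b | c', hx, rfl⟩
    · exact ⟨b, Sum.inl_injective hx, rfl⟩
    · obtain ⟨a, rfl, hac⟩ :=
        (isWeakPullback_glueAlong_of_injective kA.injective x (kC c')).1 hx.symm
      obtain ⟨c, rfl, rfl⟩ := (hK a c').1 hac
      exact ⟨eB c, (hJ.comm c).symm, hL.comm c⟩
  · rintro ⟨b, rfl, rfl⟩
    exact ⟨Sum.inl b, rfl, rfl⟩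

theorem isWeakPullback_inl_glueAlong_glueBC (hJ : IsWeakPullback eA eB jA jB)
    (hK : IsWeakPullback eA eC kA kC) (hL : IsWeakPullback eB eC lB lC) :
    IsWeakPullback kC lC (Sum.inl ∘ glueAlong jA kA) (glueBC jA jB kA kC lB lC) := by
  intro y z
  rw [comp_apply, isWeakPullback_glueBC hJ hK hL]
  constructor
  · rintro ⟨b | c', hy, rfl⟩
    · obtain ⟨a, hab, rfl⟩ :=
        (isWeakPullback_glueAlong_of_injective kA.injective (jB b) y).1 hy
      obtain ⟨c, rfl, rfl⟩ := (hJ a b).1 hab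
      exact ⟨eC c, (hK.comm c).symm, (hL.comm c).symm⟩
    · exact ⟨c', glueAlong_injective_of_injective jA.injective kA.injective hy, rfl⟩
  · rintro ⟨c', rfl, rfl⟩
    exact ⟨Sum.inr c', rfl, rfl⟩

end Amalgam

theorem generic_structure_independence_theorem_general (L : FirstOrder.Language.{v, w})
    (C A B C' DAB DAC DBC : Type u)
    [L.Structure C] [L.Structure A] [L.Structure B] [L.Structure C']
    [L.Structure DAB] [L.Structure DAC] [L.Structure DBC]
    (eA : C ↪[L] A) (eB : C ↪[L] B) (eC : C ↪[L] C')
    -- `DAB` is generated by compatibly embedded copies of `A` and `B` over `C`,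
    -- intersecting exactly in the image of `C`:
    (jA : A ↪[L] DAB) (jB : B ↪[L] DAB)
    (hj : ∀ c, jA (eA c) = jB (eB c))
    (hjint : Set.range ⇑jA ∩ Set.range ⇑jB = Set.range (fun c => jA (eA c)))
    -- `DAC` is generated by compatibly embedded copies of `A` and `C'` over `C`,
    -- intersecting exactly in the image of `C`:
    (kA : A ↪[L] DAC) (kC : C' ↪[L] DAC)
    (hk : ∀ c, kA (eA c) = kC (eC c))
    (hkint : Set.range ⇑kA ∩ Set.range ⇑kC = Set.range (fun c => kA (eA c)))
    -- `DBC` is generated by compatibly embedded copies of `B` and `C'` over `C`,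
    -- intersecting exactly in the image of `C`:
    (lB : B ↪[L] DBC) (lC : C' ↪[L] DBC)
    (hl : ∀ c, lB (eB c) = lC (eC c))
    (hlint : Set.range ⇑lB ∩ Set.range ⇑lC = Set.range (fun c => lB (eB c))) :
    ∃ (E : BStructure.{u} L) (iAB : DAB ↪[L] E) (iAC : DAC ↪[L] E) (iBC : DBC ↪[L] E),
      (∀ x, iAB (jA x) = iAC (kA x)) ∧
      (∀ x, iAB (jB x) = iBC (lB x)) ∧
      (∀ x, iAC (kC x) = iBC (lC x)) ∧
      (⇑iAB '' Set.range ⇑jA) ∩ Set.range ⇑iBC =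
        ⇑iAB '' Set.range (fun c => jA (eA c)) := by
  have hJ := isWeakPullback_of_inter_range_eq jA.injective jB.injective hj hjint
  have hK := isWeakPullback_of_inter_range_eq kA.injective kC.injective hk hkint
  have hL := isWeakPullback_of_inter_range_eq lB.injective lC.injective hl hlint
  have overlapA := (isWeakPullback_glueAlong_of_injective (p₁ := jA) kA.injective).comp_injective
    (Sum.inl_injective (β := DBC))
  have overlapB := isWeakPullback_inl_inl_glueBC hJ hK hL
  have overlapC := isWeakPullback_inl_glueAlong_glueBC hJ hK hL
  obtain ⟨E, f, hf, iAB, iAC, iBC, hAB, hAC, hBC⟩ :=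
    exists_three_embeddings (X := (DAB ⊕ DAC) ⊕ DBC) (Sum.inl_injective.comp Sum.inl_injective)
      (Sum.inl_injective.comp (glueAlong_injective_of_injective jA.injective kA.injective))
      (glueBC_injective hJ hK hL) overlapA.overlapCompatible overlapB.overlapCompatible
      overlapC.overlapCompatible
  have wA : IsWeakPullback jA kA iAB iAC := by
    rw [hAB, hAC]; exact overlapA.comp_injective hf
  have wB : IsWeakPullback jB lB iAB iBC := by
    rw [hAB, hBC]; exact overlapB.comp_injective hf
  have wC : IsWeakPullback kC lC iAC iBC := by
    rw [hAC, hBC]; exact overlapC.comp_injective hf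
  refine ⟨E, iAB, iAC, iBC, wA.comm, wB.comm, wC.comm, ?_⟩
  rw [← range_comp, ← range_comp]
  exact (hJ.paste wB).range_inter_range

/-- Structural form of the independence theorem for algebraic
independence over arbitrary sets in the generic `L`-structure. -/
theorem generic_structure_independence_theorem (L : FirstOrder.Language.{v, w})
    (C A B C' DAB DAC DBC : Type u)
    [L.Structure C] [L.Structure A] [L.Structure B] [L.Structure C']
    [L.Structure DAB] [L.Structure DAC] [L.Structure DBC]
    (eA : C ↪[L] A) (eB : C ↪[L] B) (eC : C ↪[L] C')
    -- `DAB` is generated by compatibly embedded copies of `A` and `B` over `C`,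
    -- intersecting exactly in the image of `C`:
    (jA : A ↪[L] DAB) (jB : B ↪[L] DAB)
    (hj : ∀ c, jA (eA c) = jB (eB c))
    (hjgen : Substructure.closure L (Set.range ⇑jA ∪ Set.range ⇑jB) = ⊤)
    (hjint : Set.range ⇑jA ∩ Set.range ⇑jB = Set.range (fun c => jA (eA c)))
    -- `DAC` is generated by compatibly embedded copies of `A` and `C'` over `C`,
    -- intersecting exactly in the image of `C`:
    (kA : A ↪[L] DAC) (kC : C' ↪[L] DAC)
    (hk : ∀ c, kA (eA c) = kC (eC c))
    (hkgen : Substructure.closure L (Set.range ⇑kA ∪ Set.range ⇑kC) = ⊤)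
    (hkint : Set.range ⇑kA ∩ Set.range ⇑kC = Set.range (fun c => kA (eA c)))
    -- `DBC` is generated by compatibly embedded copies of `B` and `C'` over `C`,
    -- intersecting exactly in the image of `C`:
    (lB : B ↪[L] DBC) (lC : C' ↪[L] DBC)
    (hl : ∀ c, lB (eB c) = lC (eC c))
    (hlgen : Substructure.closure L (Set.range ⇑lB ∪ Set.range ⇑lC) = ⊤)
    (hlint : Set.range ⇑lB ∩ Set.range ⇑lC = Set.range (fun c => lB (eB c))) :
    ∃ (E : BStructure.{u} L) (iAB : DAB ↪[L] E) (iAC : DAC ↪[L] E) (iBC : DBC ↪[L] E),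
      (∀ x, iAB (jA x) = iAC (kA x)) ∧
      (∀ x, iAB (jB x) = iBC (lB x)) ∧
      (∀ x, iAC (kC x) = iBC (lC x)) ∧
      (⇑iAB '' Set.range ⇑jA) ∩ Set.range ⇑iBC =
        ⇑iAB '' Set.range (fun c => jA (eA c)) :=
  generic_structure_independence_theorem_general L C A B C' DAB DAC DBC eA eB eC jA jB hj hjint kA
    kC hk hkint lB lC hl hlint
end

section
/- Let A be an existentially closed L-structure and let f be an n-ary function symbol of L with n ≥ 2. Then for any k ∈ ℕ, any pairwise distinct (n−1)-tuples b̄₁, …, b̄ₖ of elements of A, and any elements c₁, …, cₖ of A, there exists a ∈ A with f(a, b̄ᵢ) = cᵢ for all i ≤ k. -/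
/-!
Adjoin a new point `∗` to `A`, interpret `f(∗, b̄ᵢ)` as `cᵢ` (well defined because the `b̄ᵢ` are
distinct) and let every other new value be `∗`. Then `A` is a substructure of `A ∪ {∗}`, where
the quantifier-free formula `⋀ᵢ f(y, b̄ᵢ) = cᵢ` holds at `y = ∗`, so existential closedness yields
a solution in `A`.
-/

open FirstOrder FirstOrder.Language

universe u v w

namespace FirstOrder.Language

open Structure

variable {L : Language.{v, w}}

theorem BoundedFormula.isQF_foldr_inf {α : Type*} {n : ℕ} {l : List (L.BoundedFormula α n)}
    (hl : ∀ φ ∈ l, φ.IsQF) : (l.foldr (· ⊓ ·) ⊤).IsQF := by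
  induction l with
  | nil => exact .top
  | cons φ l ih => exact (hl φ List.mem_cons_self).inf (ih fun ψ hψ => hl ψ (.tail φ hψ))

theorem Formula.isQF_iInf {α β : Type*} [Finite β] {φ : β → L.Formula α}
    (hφ : ∀ b, (φ b).IsQF) : (Formula.iInf φ).IsQF :=
  BoundedFormula.isQF_foldr_inf <| by simpa using hφ

theorem _root_.IsExistentiallyClosed.exists_realize_of_embedding {A : Type u} [L.Structure A]
    (hA : IsExistentiallyClosed L A) {B : Type u} [L.Structure B] (g : A ↪[L] B)
    {α : Type*} [Finite α] {m : ℕ} {φ : L.Formula (α ⊕ Fin m)} (hφ : φ.IsQF) (a : α → A)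
    (h : ∃ b : Fin m → B, φ.Realize (Sum.elim (g ∘ a) b)) :
    ∃ b : Fin m → A, φ.Realize (Sum.elim a b) := by
  obtain ⟨k, ⟨e⟩⟩ := Finite.exists_equiv_fin α
  let up : B ≃ ULift.{max v w} B := Equiv.ulift.symm
  let _ : L.Structure (ULift.{max v w} B) := up.inducedStructure
  let ψ := φ.relabel (Sum.map e id)
  have realize_ψ (M : Type u) [L.Structure M] (x : α → M) (y : Fin m → M) :
      ψ.Realize (Sum.elim (x ∘ e.symm) y) ↔ φ.Realize (Sum.elim x y) := by
    rw [Formula.realize_relabel, Sum.elim_comp_map, Function.comp_assoc, e.symm_comp_self]; rfl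
  obtain ⟨b, hb⟩ := h
  have hψ_up : ψ.Realize (up ∘ Sum.elim ((g ∘ a) ∘ e.symm) b) :=
    (StrongHomClass.realize_formula up.inducedStructureEquiv ψ).2 ((realize_ψ B _ b).2 hb)
  rw [Sum.comp_elim] at hψ_up
  obtain ⟨b', hψ⟩ := hA _ (up.inducedStructureEquiv.toEmbedding.comp g) k m ψ (hφ.relabel _)
    (a ∘ e.symm) ⟨up ∘ b, hψ_up⟩
  exact ⟨b', (realize_ψ A a b').1 hψ⟩

section OptionExtension

variable {A : Type u} [L.Structure A]

open Classical in
@[reducible] noncomputable def optionStructure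
    (ext : ∀ {l : ℕ}, L.Functions l → (Fin l → Option A) → Option A) :
    L.Structure (Option A) where
  funMap g x := if h : ∃ y, some ∘ y = x then some (funMap g h.choose) else ext g x
  RelMap R x := ∃ y, some ∘ y = x ∧ RelMap R y

variable (ext : ∀ {l : ℕ}, L.Functions l → (Fin l → Option A) → Option A)

noncomputable def optionSomeEmbedding : @Embedding L A (Option A) _ (optionStructure ext) :=
  let _ := optionStructure ext
  { toFun := some
    inj' := Option.some_injective A
    map_fun' := fun g x => by
      classical
      have h : ∃ y, some ∘ y = some ∘ x := ⟨x, rfl⟩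
      change _ = dite _ _ _
      rw [dif_pos h, (Option.some_injective A).comp_left h.choose_spec]
    map_rel' := fun R x => by
      change (∃ y, some ∘ y = some ∘ x ∧ RelMap R y) ↔ _
      simp only [(Option.some_injective A).comp_left.eq_iff, exists_eq_left] }

theorem funMap_optionStructure_of_eq_none {l : ℕ} (g : L.Functions l) {x : Fin l → Option A}
    {i : Fin l} (hi : x i = none) : @funMap L (Option A) (optionStructure ext) l g x = ext g x :=
  dif_neg fun ⟨y, hy⟩ => by simp [← hy] at hi

end OptionExtension

open Classical in
/-- Comparing tuples as lists avoids casting between the arities `l` and `n + 1`. -/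
noncomputable def valuesAtNone {A : Type*} {n k : ℕ} (bs : Fin k → Fin n → A) (c : Fin k → A)
    {l : ℕ} (_ : L.Functions l) (x : Fin l → Option A) : Option A :=
  if h : ∃ i, List.ofFn x = none :: List.ofFn (some ∘ bs i) then some (c h.choose) else none

theorem valuesAtNone_cons_none {A : Type*} {n k : ℕ} {bs : Fin k → Fin n → A}
    (hbs : Function.Injective bs) (c : Fin k → A) (g : L.Functions (n + 1)) (i : Fin k) :
    valuesAtNone bs c g (Fin.cons none (some ∘ bs i)) = some (c i) := by
  have h : ∃ i', List.ofFn (Fin.cons none (some ∘ bs i) : Fin (n + 1) → Option A) =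
      none :: List.ofFn (some ∘ bs i') := ⟨i, List.ofFn_cons _ _⟩
  obtain ⟨-, hi⟩ := List.cons_eq_cons.1 ((List.ofFn_cons _ _).symm.trans h.choose_spec)
  rw [valuesAtNone, dif_pos h,
    ← hbs ((Option.some_injective A).comp_left (List.ofFn_injective hi))]

/-- `⋀ᵢ f(y, b̄ᵢ) = cᵢ`, with parameter `inl i` for `cᵢ` and `inr (i, j)` for the `j`-th entry
of `b̄ᵢ`. -/
noncomputable def genericityFormula {n : ℕ} (f : L.Functions (n + 1)) (k : ℕ) :
    L.Formula ((Fin k ⊕ Fin k × Fin n) ⊕ Fin 1) :=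
  Formula.iInf fun i => Term.equal
    (Term.func f (Fin.cons (Term.var (Sum.inr 0)) fun j => Term.var (Sum.inl (Sum.inr (i, j)))))
    (Term.var (Sum.inl (Sum.inl i)))

theorem isQF_genericityFormula {n : ℕ} (f : L.Functions (n + 1)) (k : ℕ) :
    (genericityFormula f k).IsQF :=
  Formula.isQF_iInf fun _ => (BoundedFormula.IsAtomic.equal _ _).isQF

theorem realize_genericityFormula {M : Type*} [L.Structure M] {n k : ℕ}
    (f : L.Functions (n + 1)) (bs : Fin k → Fin n → M) (c : Fin k → M) (y : Fin 1 → M) :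
    (genericityFormula f k).Realize (Sum.elim (Sum.elim c fun p => bs p.1 p.2) y) ↔
      ∀ i, funMap f (Fin.cons (y 0) (bs i)) = c i := by
  simp only [genericityFormula, Formula.realize_iInf, Formula.realize_equal, Term.realize_func,
    Term.realize_var, Sum.elim_inl]
  exact forall_congr' fun i => Eq.congr_left <| congrArg (funMap f) <|
    funext <| Fin.cases rfl fun _ => rfl

end FirstOrder.Language

theorem existentiallyClosed_generic_function_general (L : FirstOrder.Language.{v, w})
    (A : Type u) [L.Structure A] (hA : IsExistentiallyClosed L A)
    (n : ℕ) (f : L.Functions (n + 1))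
    (k : ℕ) (bs : Fin k → (Fin n → A)) (hbs : Function.Injective bs) (c : Fin k → A) :
    ∃ a : A, ∀ i : Fin k, Structure.funMap f (Fin.cons a (bs i)) = c i := by
  let _ := optionStructure (valuesAtNone (L := L) bs c)
  have realize_at_none : (genericityFormula f k).Realize
      (Sum.elim (some ∘ Sum.elim c fun p => bs p.1 p.2) fun _ => none) := by
    rw [Sum.comp_elim]
    refine (realize_genericityFormula f (fun i j => some (bs i j)) _ _).2 fun i => ?_
    exact (funMap_optionStructure_of_eq_none _ f (i := 0) rfl).trans
      (valuesAtNone_cons_none hbs c f i)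
  obtain ⟨y, hy⟩ := hA.exists_realize_of_embedding (optionSomeEmbedding _)
    (isQF_genericityFormula f k) _ ⟨_, realize_at_none⟩
  exact ⟨y 0, (realize_genericityFormula f bs c y).1 hy⟩

/-- In an existentially closed `L`-structure, an `(n+1)`-ary function
symbol (with `n ≥ 1`, i.e. arity at least `2`) is generic: for pairwise distinct
`n`-tuples `b̄₁, …, b̄ₖ` and arbitrary elements `c₁, …, cₖ` there is an `a` with
`f(a, b̄ᵢ) = cᵢ` for all `i`. -/
theorem existentiallyClosed_generic_function (L : FirstOrder.Language.{v, w})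
    (A : Type u) [L.Structure A] (hA : IsExistentiallyClosed L A)
    (n : ℕ) (hn : 1 ≤ n) (f : L.Functions (n + 1))
    (k : ℕ) (bs : Fin k → (Fin n → A)) (hbs : Function.Injective bs) (c : Fin k → A) :
    ∃ a : A, ∀ i : Fin k, Structure.funMap f (Fin.cons a (bs i)) = c i :=
  existentiallyClosed_generic_function_general L A hA n f k bs hbs c
end

section
/- Compatible unions of flat diagrams are consistent: let (Δ_i)_{i∈I} be a family of consistent flat diagrams, where Δ_i has variable set V_i, and suppose that for all i ≠ j in I there is a complete consistent flat diagram in the variables V_i ∩ V_j which is contained in both Δ_i and Δ_j. Then ⋃_{i∈I} Δ_i is a consistent flat diagram in the variables ⋃_{i∈I} V_i. -/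
open FirstOrder FirstOrder.Language

universe u v w

/-- Compatible unions of flat diagrams are consistent: if each `Δᵢ` is
a consistent flat diagram in the variables `Vᵢ` and any two of them contain a common
complete consistent flat diagram in the variables `Vᵢ ∩ Vⱼ`, then `⋃ᵢ Δᵢ` is a
consistent flat diagram in the variables `⋃ᵢ Vᵢ`. -/
theorem union_flatDiagrams_consistent (L : FirstOrder.Language.{v, w})
    (V : Type u) {I : Type u'} (Vs : I → Set V) (Δs : I → Set (FlatFormula L V))
    (hvars : ∀ i, ∀ φ ∈ Δs i, FlatFormula.VarsIn (Vs i) φ)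
    (hcons : ∀ i, FlatConsistent (Δs i))
    (hcompat : ∀ i j, i ≠ j →
      ∃ Δ₀ : Set (FlatFormula L V),
        FlatCompleteOn (Vs i ∩ Vs j) Δ₀ ∧ Δ₀ ⊆ Δs i ∧ Δ₀ ⊆ Δs j) :
    FlatConsistent (⋃ i, Δs i) ∧
      ∀ φ ∈ ⋃ i, Δs i, FlatFormula.VarsIn (⋃ i, Vs i) φ := by
  constructor
  · constructor
    · rintro n R z ⟨ht, hf⟩
      obtain ⟨i, hi⟩ := Set.mem_iUnion.1 ht
      obtain ⟨j, hj⟩ := Set.mem_iUnion.1 hf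
      rcases eq_or_ne i j with rfl | hij
      · exact (hcons i).1 R z ⟨hi, hj⟩
      · obtain ⟨Δ₀, ⟨hc₀, hv₀, hrel, hfun⟩, hsi, hsj⟩ := hcompat i j hij
        have hz : ∀ k, z k ∈ Vs i ∩ Vs j := fun k =>
          ⟨hvars i _ hi k, hvars j _ hj k⟩
        rcases hrel R z hz with h | h
        · exact (hcons j).1 R z ⟨hsj h, hj⟩
        · exact (hcons i).1 R z ⟨hi, hsi h⟩
    · intro n f z z₁ z₂ h₁ h₂
      obtain ⟨i, hi⟩ := Set.mem_iUnion.1 h₁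
      obtain ⟨j, hj⟩ := Set.mem_iUnion.1 h₂
      rcases eq_or_ne i j with rfl | hij
      · exact (hcons i).2 f z z₁ z₂ hi hj
      · obtain ⟨Δ₀, ⟨hc₀, hv₀, hrel, hfun⟩, hsi, hsj⟩ := hcompat i j hij
        have hz : ∀ k, z k ∈ Vs i ∩ Vs j := fun k =>
          ⟨(hvars i _ hi).1 k, (hvars j _ hj).1 k⟩
        obtain ⟨z', _, hz'⟩ := hfun f z hz
        have e₁ : z₁ = z' := (hcons i).2 f z z₁ z' hi (hsi hz')
        have e₂ : z₂ = z' := (hcons j).2 f z z₂ z' hj (hsj hz')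
        rw [e₁, e₂]
  · intro φ hφ
    obtain ⟨i, hi⟩ := Set.mem_iUnion.1 hφ
    have h := hvars i φ hi
    cases φ with
    | rel R z pos => exact fun k => Set.mem_iUnion.2 ⟨i, h k⟩
    | func f z z' =>
      exact ⟨fun k => Set.mem_iUnion.2 ⟨i, h.1 k⟩, Set.mem_iUnion.2 ⟨i, h.2⟩⟩
end

section
/- Let L be a first-order language and let t be an L-term whose variables are indexed by a two-element type {v₀, v₁}. If the term obtained from t by relabeling along the transposition interchanging v₀ and v₁ is equal to t, then neither variable occurs in t; that is, there is an L-term t₀ with variables indexed by the empty type such that t is the relabeling of t₀. -/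
open FirstOrder FirstOrder.Language

/-- If an `L`-term `t` in the two variables `v₀, v₁` is fixed by the
relabeling along the transposition interchanging `v₀` and `v₁`, then neither variable
occurs in `t`: `t` is the relabeling of a term `t₀` with variables indexed by the empty
type. -/
theorem term_fixed_by_swap_is_closed (L : FirstOrder.Language.{v, w})
    (t : L.Term (Fin 2))
    (h : t.relabel (⇑(Equiv.swap (0 : Fin 2) 1)) = t) :
    ∃ t₀ : L.Term Empty, t = t₀.relabel (fun e => e.elim) := by
  induction t with
  | var i =>
    exfalso
    simp only [Term.relabel] at h
    have : Equiv.swap (0 : Fin 2) 1 i = i := by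
      injection h
    fin_cases i <;> simp [Equiv.swap_apply_of_ne_of_ne] at this
  | func f ts ih =>
    simp only [Term.relabel, Term.func.injEq, heq_eq_eq, true_and] at h
    have : ∀ i, ∃ t₀ : L.Term Empty, ts i = t₀.relabel (fun e => e.elim) := fun i =>
      ih i (congrFun h i)
    choose t₀s ht₀s using this
    exact ⟨Term.func f t₀s, by simp only [Term.relabel]; exact congrArg _ (funext ht₀s)⟩
end
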